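/- arXiv:2312.08848 — 6 statements merged into one kernel-verified Lean document; each statement's English description precedes it below -/
import Mathlib

section
/- Let U be a unitary operator on a finite-dimensional Hilbert space H, and let {F_j} be a family of quantum channels (CPTP maps) on H with a probability distribution {p_j}. If sup over unit vectors ψ ∈ H of ‖U|ψ⟩⟨ψ|U† − ∑_j p_j F_j(|ψ⟩⟨ψ|)‖₁ ≤ Δ, then for every unit vector ψ, ∑_j p_j ‖U|ψ⟩⟨ψ|U† − F_j(|ψ⟩⟨ψ|)‖₁² ≤ 2Δ. -/
open Matrix Complex
open scoped ComplexOrder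

/-- The positive semidefinite square root of a positive semidefinite matrix
(Mathlib's former `Matrix.PosSemidef.sqrt`, removed upstream). -/
noncomputable def Matrix.PosSemidef.sqrt {n 𝕜 : Type*} [Fintype n] [DecidableEq n] [RCLike 𝕜]
    {A : Matrix n n 𝕜} (hA : A.PosSemidef) : Matrix n n 𝕜 :=
  hA.1.eigenvectorUnitary.1 * diagonal ((↑) ∘ (√·) ∘ hA.1.eigenvalues) *
    (star hA.1.eigenvectorUnitary : Matrix n n 𝕜)

/-- The trace norm `‖A‖₁ = tr √(A† A)` of a complex square matrix. -/
noncomputable def traceNorm {d : ℕ} (A : Matrix (Fin d) (Fin d) ℂ) : ℝ :=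
  ((Matrix.posSemidef_conjTranspose_mul_self A).sqrt).trace.re

/-- A quantum channel (CPTP map) in Kraus form: `F(A) = ∑ᵢ Kᵢ A Kᵢ†` with `∑ᵢ Kᵢ† Kᵢ = 1`. -/
def IsQuantumChannel {d : ℕ} (F : Matrix (Fin d) (Fin d) ℂ → Matrix (Fin d) (Fin d) ℂ) : Prop :=
  ∃ (m : ℕ) (K : Fin m → Matrix (Fin d) (Fin d) ℂ),
    (∀ A, F A = ∑ i, K i * A * (K i)ᴴ) ∧ (∑ i, (K i)ᴴ * K i = 1)

/-- The rank-one projector `|ψ⟩⟨ψ|` of a vector `ψ`. -/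
def proj {d : ℕ} (ψ : Fin d → ℂ) : Matrix (Fin d) (Fin d) ℂ :=
  Matrix.vecMulVec ψ (star ψ)

open scoped MatrixOrder in
lemma Matrix.PosSemidef.sqrt_eq_cfc {d : ℕ} {A : Matrix (Fin d) (Fin d) ℂ} (hA : A.PosSemidef) :
    hA.sqrt = CFC.sqrt A := by
  rw [CFC.sqrt_eq_real_sqrt A hA.nonneg, cfcₙ_eq_cfc, hA.1.cfc_eq]
  rfl

open scoped MatrixOrder in
lemma Matrix.PosSemidef.eq_sqrt_of_sq_eq {d : ℕ} {A B : Matrix (Fin d) (Fin d) ℂ}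
    (hA : A.PosSemidef) (hB : B.PosSemidef) (hAB : A ^ 2 = B) : A = hB.sqrt := by
  rw [hB.sqrt_eq_cfc, ← hAB, CFC.sqrt_sq A hA.nonneg]

open scoped MatrixOrder in
lemma Matrix.PosSemidef.posSemidef_sqrt {d : ℕ} {A : Matrix (Fin d) (Fin d) ℂ}
    (hA : A.PosSemidef) : hA.sqrt.PosSemidef := by
  rw [hA.sqrt_eq_cfc]
  exact Matrix.nonneg_iff_posSemidef.mp (CFC.sqrt_nonneg A)

open scoped MatrixOrder in
lemma Matrix.PosSemidef.sqrt_mul_self {d : ℕ} {A : Matrix (Fin d) (Fin d) ℂ}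
    (hA : A.PosSemidef) : hA.sqrt * hA.sqrt = A := by
  rw [hA.sqrt_eq_cfc]
  exact CFC.sqrt_mul_sqrt_self A hA.nonneg

section Helpers

variable {d : ℕ} {A : Matrix (Fin d) (Fin d) ℂ}

lemma proj_mulVec (ψ w : Fin d → ℂ) : proj ψ *ᵥ w = (star ψ ⬝ᵥ w) • ψ := by
  ext i
  simp [proj, vecMulVec, mulVec, dotProduct, Finset.mul_sum, mul_comm, mul_left_comm]

lemma proj_isHermitian (ψ : Fin d → ℂ) : (proj ψ).IsHermitian := by
  ext i j
  simp [proj, vecMulVec, conjTranspose_apply, mul_comm]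

lemma star_dotProduct_conj (v w : Fin d → ℂ) :
    star v ⬝ᵥ w = starRingEnd ℂ (star w ⬝ᵥ v) := by
  simp [dotProduct, mul_comm]

lemma proj_posSemidef (ψ : Fin d → ℂ) : (proj ψ).PosSemidef := by
  refine Matrix.PosSemidef.of_dotProduct_mulVec_nonneg (proj_isHermitian ψ) fun x => ?_
  rw [proj_mulVec, dotProduct_smul]
  have : star x ⬝ᵥ ψ = starRingEnd ℂ (star ψ ⬝ᵥ x) := star_dotProduct_conj x ψ
  rw [smul_eq_mul, mul_comm, this, Complex.conj_mul', ← Complex.ofReal_pow]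
  exact Complex.zero_le_real.2 (by positivity)

lemma trace_proj (ψ : Fin d → ℂ) : (proj ψ).trace = star ψ ⬝ᵥ ψ := by
  simp [proj, trace, vecMulVec, diag, dotProduct, mul_comm]

lemma dot_cs (x y : Fin d → ℂ) :
    ‖star x ⬝ᵥ y‖ ^ 2 ≤ (star x ⬝ᵥ x).re * (star y ⬝ᵥ y).re := by
  let x' : EuclideanSpace ℂ (Fin d) := (WithLp.equiv 2 (Fin d → ℂ)).symm x
  let y' : EuclideanSpace ℂ (Fin d) := (WithLp.equiv 2 (Fin d → ℂ)).symm y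
  have h1 : (inner ℂ x' y' : ℂ) = star x ⬝ᵥ y :=
    (EuclideanSpace.inner_eq_star_dotProduct x' y').trans (dotProduct_comm _ _)
  have h2 : (inner ℂ x' x' : ℂ) = star x ⬝ᵥ x :=
    (EuclideanSpace.inner_eq_star_dotProduct x' x').trans (dotProduct_comm _ _)
  have h3 : (inner ℂ y' y' : ℂ) = star y ⬝ᵥ y :=
    (EuclideanSpace.inner_eq_star_dotProduct y' y').trans (dotProduct_comm _ _)
  have hx : (star x ⬝ᵥ x).re = ‖x'‖ ^ 2 := by
    rw [← h2, inner_self_eq_norm_sq_to_K]; norm_cast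
  have hy : (star y ⬝ᵥ y).re = ‖y'‖ ^ 2 := by
    rw [← h3, inner_self_eq_norm_sq_to_K]; norm_cast
  have := norm_inner_le_norm (𝕜 := ℂ) x' y'
  rw [h1] at this
  have habs : ‖(star x ⬝ᵥ y : ℂ)‖ = ‖(star x ⬝ᵥ y : ℂ)‖ := rfl
  rw [habs, hx, hy]
  calc ‖(star x ⬝ᵥ y : ℂ)‖ ^ 2 ≤ (‖x'‖ * ‖y'‖) ^ 2 := by
        apply pow_le_pow_left₀ (norm_nonneg _) this
      _ = ‖x'‖^2 * ‖y'‖^2 := by ring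

lemma herm_spectral (hA : A.IsHermitian) :
    A = (hA.eigenvectorUnitary : Matrix (Fin d) (Fin d) ℂ) *
      diagonal (fun i => (hA.eigenvalues i : ℂ)) *
      (hA.eigenvectorUnitary : Matrix (Fin d) (Fin d) ℂ)ᴴ :=
  hA.spectral_theorem

lemma WcW (hA : A.IsHermitian) :
    (hA.eigenvectorUnitary : Matrix (Fin d) (Fin d) ℂ)ᴴ *
      (hA.eigenvectorUnitary : Matrix (Fin d) (Fin d) ℂ) = 1 := by
  have := hA.eigenvectorUnitary.2
  rw [Matrix.mem_unitaryGroup_iff'] at this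
  simpa [Matrix.star_eq_conjTranspose] using this

lemma WWc (hA : A.IsHermitian) :
    (hA.eigenvectorUnitary : Matrix (Fin d) (Fin d) ℂ) *
      (hA.eigenvectorUnitary : Matrix (Fin d) (Fin d) ℂ)ᴴ = 1 := by
  have := hA.eigenvectorUnitary.2
  rw [Matrix.mem_unitaryGroup_iff] at this
  simpa [Matrix.star_eq_conjTranspose] using this

lemma traceNorm_herm (hA : A.IsHermitian) :
    traceNorm A = ∑ i, |hA.eigenvalues i| := by
  set W : Matrix (Fin d) (Fin d) ℂ := (hA.eigenvectorUnitary : Matrix (Fin d) (Fin d) ℂ) with hWdef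
  set M : Matrix (Fin d) (Fin d) ℂ :=
    W * diagonal (fun i => ((|hA.eigenvalues i| : ℝ) : ℂ)) * Wᴴ with hMdef
  have hMpsd : M.PosSemidef := by
    refine Matrix.PosSemidef.mul_mul_conjTranspose_same ?_ W
    refine Matrix.PosSemidef.diagonal fun i => ?_
    exact Complex.zero_le_real.2 (abs_nonneg _)
  have hM2 : M ^ 2 = Aᴴ * A := by
    rw [hA.eq, pow_two, hMdef]
    calc (W * diagonal (fun i => ((|hA.eigenvalues i| : ℝ) : ℂ)) * Wᴴ) *
          (W * diagonal (fun i => ((|hA.eigenvalues i| : ℝ) : ℂ)) * Wᴴ)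
        = W * (diagonal (fun i => ((|hA.eigenvalues i| : ℝ) : ℂ)) * (Wᴴ * W) *
            diagonal (fun i => ((|hA.eigenvalues i| : ℝ) : ℂ))) * Wᴴ := by
          simp only [Matrix.mul_assoc]
      _ = W * diagonal (fun i => ((hA.eigenvalues i : ℂ)) ^ 2) * Wᴴ := by
          rw [WcW hA, Matrix.mul_one, diagonal_mul_diagonal]
          have : (fun i => ((|hA.eigenvalues i| : ℝ) : ℂ) * ((|hA.eigenvalues i| : ℝ) : ℂ))
              = fun i => ((hA.eigenvalues i : ℂ)) ^ 2 := by
            funext i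
            rw [← Complex.ofReal_mul, ← abs_mul, abs_mul_self]
            push_cast
            ring
          rw [this]
      _ = A * A := by
          conv_rhs => rw [herm_spectral hA]
          simp only [Matrix.mul_assoc, ← hWdef]
          rw [show Wᴴ * (W * (diagonal (fun i => (hA.eigenvalues i : ℂ)) * Wᴴ))
              = diagonal (fun i => (hA.eigenvalues i : ℂ)) * Wᴴ by
            rw [← Matrix.mul_assoc, ← Matrix.mul_assoc, WcW hA, Matrix.one_mul]]
          rw [← Matrix.mul_assoc (diagonal _), diagonal_mul_diagonal]
          have : (fun i => (hA.eigenvalues i : ℂ) * (hA.eigenvalues i : ℂ))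
              = fun i => ((hA.eigenvalues i : ℂ)) ^ 2 := by
            funext i
            ring
          rw [this]
  have hsqrt : M = (Matrix.posSemidef_conjTranspose_mul_self A).sqrt :=
    hMpsd.eq_sqrt_of_sq_eq _ hM2
  rw [traceNorm, ← hsqrt, hMdef, Matrix.trace_mul_cycle, WcW hA,
    Matrix.one_mul, Matrix.trace_diagonal]
  simp

lemma trace_herm (hA : A.IsHermitian) : A.trace.re = ∑ i, hA.eigenvalues i := by
  conv_lhs => rw [herm_spectral hA]
  rw [Matrix.trace_mul_cycle, WcW hA, Matrix.one_mul, Matrix.trace_diagonal]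
  simp

lemma quad_herm (hA : A.IsHermitian) (v : Fin d → ℂ) :
    star v ⬝ᵥ (A *ᵥ v) =
      ((∑ i, hA.eigenvalues i *
        Complex.normSq (((hA.eigenvectorUnitary : Matrix (Fin d) (Fin d) ℂ)ᴴ *ᵥ v) i) : ℝ) : ℂ) := by
  set W : Matrix (Fin d) (Fin d) ℂ := (hA.eigenvectorUnitary : Matrix (Fin d) (Fin d) ℂ) with hWdef
  set c : Fin d → ℂ := Wᴴ *ᵥ v with hcdef
  have h1 : A *ᵥ v = W *ᵥ (diagonal (fun i => (hA.eigenvalues i : ℂ)) *ᵥ c) := by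
    conv_lhs => rw [herm_spectral hA]
    simp only [Matrix.mul_assoc, ← Matrix.mulVec_mulVec, ← hWdef, ← hcdef]
  have h2 : star v ᵥ* W = star c := by
    rw [hcdef, Matrix.star_mulVec, conjTranspose_conjTranspose]
  rw [h1, Matrix.dotProduct_mulVec, h2]
  push_cast
  simp only [dotProduct, mulVec_diagonal, Pi.star_apply]
  congr 1
  funext i
  rw [show star (c i) * ((hA.eigenvalues i : ℂ) * c i)
      = (hA.eigenvalues i : ℂ) * (star (c i) * c i) by ring]
  rw [Complex.star_def, Complex.conj_mul', Complex.normSq_eq_norm_sq]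
  norm_cast

lemma parseval_herm (hA : A.IsHermitian) (v : Fin d → ℂ) :
    ∑ i, Complex.normSq (((hA.eigenvectorUnitary : Matrix (Fin d) (Fin d) ℂ)ᴴ *ᵥ v) i)
      = (star v ⬝ᵥ v).re := by
  set W : Matrix (Fin d) (Fin d) ℂ := (hA.eigenvectorUnitary : Matrix (Fin d) (Fin d) ℂ) with hWdef
  set c : Fin d → ℂ := Wᴴ *ᵥ v with hcdef
  have h2 : star v ᵥ* W = star c := by
    rw [hcdef, Matrix.star_mulVec, conjTranspose_conjTranspose]
  have key : star c ⬝ᵥ c = star v ⬝ᵥ v := by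
    conv_lhs => rw [← h2, ← Matrix.dotProduct_mulVec, hcdef, Matrix.mulVec_mulVec, WWc hA,
      Matrix.one_mulVec]
  have h3 : star c ⬝ᵥ c = ((∑ i, Complex.normSq (c i) : ℝ) : ℂ) := by
    push_cast
    simp only [dotProduct, Pi.star_apply]
    congr 1
    funext i
    rw [Complex.star_def, Complex.conj_mul', Complex.normSq_eq_norm_sq]
    norm_cast
  rw [← key, h3]
  simp

lemma col_eigen (hA : A.IsHermitian) (k : Fin d) :
    A *ᵥ (fun j => (hA.eigenvectorUnitary : Matrix (Fin d) (Fin d) ℂ) j k)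
      = (hA.eigenvalues k : ℂ) • fun j => (hA.eigenvectorUnitary : Matrix (Fin d) (Fin d) ℂ) j k := by
  have hu : (fun j => (hA.eigenvectorUnitary : Matrix (Fin d) (Fin d) ℂ) j k)
      = ⇑(hA.eigenvectorBasis k) := rfl
  rw [hu, hA.mulVec_eigenvectorBasis]
  ext j
  simp [Complex.real_smul]

lemma col_orth (hA : A.IsHermitian) (k l : Fin d) :
    star (fun j => (hA.eigenvectorUnitary : Matrix (Fin d) (Fin d) ℂ) j k) ⬝ᵥ
      (fun j => (hA.eigenvectorUnitary : Matrix (Fin d) (Fin d) ℂ) j l)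
      = if k = l then 1 else 0 := by
  have h := congrFun (congrFun (WcW hA) k) l
  rw [Matrix.mul_apply] at h
  simpa [Matrix.conjTranspose_apply, dotProduct, Matrix.one_apply] using h

lemma scalar_step (l x f : ℝ) (h1 : x*(1-l)^2 ≤ f*(x-l)) (h2 : f ≤ 1+l-2*l*x) (h3 : 0 < l)
    (h4 : l ≤ x) (_h5 : x ≤ 1) (_h6 : 0 ≤ f) : l^2 ≤ 1 - f := by
  have h7 : f * (x - l) ≤ (1+l-2*l*x) * (x - l) :=
    mul_le_mul_of_nonneg_right h2 (by linarith)
  have hP : 0 ≤ l*((1-x)*(2*x-1-l)) := by nlinarith [h1, h7]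
  rcases le_or_gt 0 (2*x-1-l) with hc | hc
  · nlinarith [mul_nonneg h3.le hc]
  · have hx1 : 1 ≤ x := by
      by_contra hcon
      push_neg at hcon
      nlinarith [mul_pos (mul_pos h3 (by linarith : (0:ℝ) < 1-x))
        (by linarith : (0:ℝ) < -(2*x-1-l))]
    linarith

end Helpers

section Key

variable {d : ℕ}

lemma key_lower {σ : Matrix (Fin d) (Fin d) ℂ} (φ : Fin d → ℂ) (hφ : star φ ⬝ᵥ φ = 1)
    (hσh : σ.IsHermitian) (hσtr : σ.trace = 1) :
    2 * (1 - (star φ ⬝ᵥ (σ *ᵥ φ)).re) ≤ traceNorm (proj φ - σ) := by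
  set A : Matrix (Fin d) (Fin d) ℂ := proj φ - σ with hAdef
  have hA : A.IsHermitian := (proj_isHermitian φ).sub hσh
  set lam : Fin d → ℝ := hA.eigenvalues with hlamdef
  set xx : Fin d → ℝ :=
    fun i => Complex.normSq (((hA.eigenvectorUnitary : Matrix (Fin d) (Fin d) ℂ)ᴴ *ᵥ φ) i)
    with hxxdef
  have hxx0 : ∀ i, 0 ≤ xx i := fun i => Complex.normSq_nonneg _
  have hxxsum : ∑ i, xx i = 1 := by
    have := parseval_herm hA φ
    rw [hφ] at this
    simpa using this
  have hxx1 : ∀ i, xx i ≤ 1 := by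
    intro i
    have := Finset.single_le_sum (fun j _ => hxx0 j) (Finset.mem_univ i)
    rw [hxxsum] at this
    exact this
  have htr0 : ∑ i, lam i = 0 := by
    have h1 := trace_herm hA
    have h2 : A.trace = 0 := by
      rw [hAdef, Matrix.trace_sub, trace_proj, hφ, hσtr, sub_self]
    rw [h2] at h1
    simpa using h1.symm
  have hquadA : ∑ i, lam i * xx i = 1 - (star φ ⬝ᵥ (σ *ᵥ φ)).re := by
    have hq := quad_herm hA φ
    have h1 : star φ ⬝ᵥ (A *ᵥ φ) = 1 - star φ ⬝ᵥ (σ *ᵥ φ) := by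
      rw [hAdef, Matrix.sub_mulVec, dotProduct_sub, proj_mulVec, dotProduct_smul, hφ]
      simp
    rw [h1] at hq
    have h2 := congrArg Complex.re hq
    simp only [Complex.sub_re, Complex.one_re, Complex.ofReal_re] at h2
    simp only [hlamdef, hxxdef]
    linarith [h2]
  rw [traceNorm_herm hA]
  have hstep : ∀ i ∈ Finset.univ (α := Fin d), lam i * (2 * xx i - 1) ≤ |lam i| := by
    intro i _
    calc lam i * (2 * xx i - 1) ≤ |lam i * (2 * xx i - 1)| := le_abs_self _
      _ = |lam i| * |2 * xx i - 1| := abs_mul _ _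
      _ ≤ |lam i| * 1 := by
          apply mul_le_mul_of_nonneg_left _ (abs_nonneg _)
          rw [abs_le]
          constructor <;> nlinarith [hxx0 i, hxx1 i]
      _ = |lam i| := mul_one _
  have hsum := Finset.sum_le_sum hstep
  have hexp : ∑ i, lam i * (2 * xx i - 1) = 2 * (1 - (star φ ⬝ᵥ (σ *ᵥ φ)).re) := by
    have : ∑ i, lam i * (2 * xx i - 1) = 2 * (∑ i, lam i * xx i) - ∑ i, lam i := by
      rw [Finset.mul_sum, ← Finset.sum_sub_distrib]
      exact Finset.sum_congr rfl fun i _ => by ring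
    rw [this, hquadA, htr0]
    ring
  linarith [hsum, hexp.symm.le]

lemma key_upper {σ : Matrix (Fin d) (Fin d) ℂ} (φ : Fin d → ℂ) (hφ : star φ ⬝ᵥ φ = 1)
    (hσ : σ.PosSemidef) (hσtr : σ.trace = 1) :
    traceNorm (proj φ - σ) ^ 2 ≤ 4 * (1 - (star φ ⬝ᵥ (σ *ᵥ φ)).re) := by
  set A : Matrix (Fin d) (Fin d) ℂ := proj φ - σ with hAdef
  have hA : A.IsHermitian := (proj_isHermitian φ).sub hσ.1
  set F : ℝ := (star φ ⬝ᵥ (σ *ᵥ φ)).re with hFdef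
  have hF0 : 0 ≤ F := by
    have := hσ.re_dotProduct_nonneg φ
    simpa [hFdef] using this
  have hF1 : F ≤ 1 := by
    have hq := quad_herm hσ.1 φ
    have hp := parseval_herm hσ.1 φ
    rw [hφ] at hp
    simp only [Complex.one_re] at hp
    have hFeq : F = ∑ i, hσ.1.eigenvalues i *
        Complex.normSq (((hσ.1.eigenvectorUnitary : Matrix (Fin d) (Fin d) ℂ)ᴴ *ᵥ φ) i) := by
      rw [hFdef, hq]
      simp
    rw [hFeq]
    calc ∑ i, hσ.1.eigenvalues i *
          Complex.normSq (((hσ.1.eigenvectorUnitary : Matrix (Fin d) (Fin d) ℂ)ᴴ *ᵥ φ) i)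
        ≤ ∑ i, hσ.1.eigenvalues i := by
          apply Finset.sum_le_sum
          intro i _
          have h1 := hσ.eigenvalues_nonneg i
          have h2 : Complex.normSq (((hσ.1.eigenvectorUnitary : Matrix (Fin d) (Fin d) ℂ)ᴴ *ᵥ φ) i)
              ≤ 1 := by
            have := Finset.single_le_sum
              (fun j (_ : j ∈ Finset.univ) => Complex.normSq_nonneg
                (((hσ.1.eigenvectorUnitary : Matrix (Fin d) (Fin d) ℂ)ᴴ *ᵥ φ) j))
              (Finset.mem_univ i)
            rw [hp] at this
            exact this
          nlinarith
      _ = 1 := by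
          rw [← trace_herm hσ.1, hσtr]
          simp
  -- eigen data of A
  set lam : Fin d → ℝ := hA.eigenvalues with hlamdef
  set xx : Fin d → ℝ :=
    fun i => Complex.normSq (((hA.eigenvectorUnitary : Matrix (Fin d) (Fin d) ℂ)ᴴ *ᵥ φ) i)
    with hxxdef
  have hxx0 : ∀ i, 0 ≤ xx i := fun i => Complex.normSq_nonneg _
  have hxxsum : ∑ i, xx i = 1 := by
    have := parseval_herm hA φ
    rw [hφ] at this
    simpa using this
  have htr0 : ∑ i, lam i = 0 := by
    have h1 := trace_herm hA
    have h2 : A.trace = 0 := by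
      rw [hAdef, Matrix.trace_sub, trace_proj, hφ, hσtr, sub_self]
    rw [h2] at h1
    simpa using h1.symm
  have hquadA : ∑ i, lam i * xx i = 1 - F := by
    have hq := quad_herm hA φ
    have h1 : star φ ⬝ᵥ (A *ᵥ φ) = 1 - star φ ⬝ᵥ (σ *ᵥ φ) := by
      rw [hAdef, Matrix.sub_mulVec, dotProduct_sub, proj_mulVec, dotProduct_smul, hφ]
      simp
    rw [h1] at hq
    have h2 := congrArg Complex.re hq
    simp only [Complex.sub_re, Complex.one_re, Complex.ofReal_re] at h2
    simp only [hlamdef, hxxdef, hFdef]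
    linarith [h2]
  rw [traceNorm_herm hA]
  by_cases hpos : ∃ k, 0 < lam k
  case neg =>
    push_neg at hpos
    have hzero : ∑ i, |lam i| = 0 := by
      have : ∑ i, |lam i| = ∑ i, -lam i :=
        Finset.sum_congr rfl fun i _ => abs_of_nonpos (hpos i)
      rw [this, Finset.sum_neg_distrib, htr0, neg_zero]
    rw [hzero]
    nlinarith [hF1]
  case pos =>
    obtain ⟨k, hk⟩ := hpos
    set W : Matrix (Fin d) (Fin d) ℂ := (hA.eigenvectorUnitary : Matrix (Fin d) (Fin d) ℂ)
      with hWdef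
    set u : Fin d → ℂ := fun j => W j k with hudef
    set a : ℂ := star φ ⬝ᵥ u with hadef
    set x : ℝ := Complex.normSq a with hxdef
    -- negativity of quadratic form on φ-orthogonal vectors
    have hneg : ∀ w : Fin d → ℂ, star φ ⬝ᵥ w = 0 → (star w ⬝ᵥ (A *ᵥ w)).re ≤ 0 := by
      intro w hw
      have h1 : A *ᵥ w = - (σ *ᵥ w) := by
        rw [hAdef, Matrix.sub_mulVec, proj_mulVec, hw, zero_smul, zero_sub]
      rw [h1, dotProduct_neg]
      have := hσ.re_dotProduct_nonneg w
      simp only [Complex.neg_re]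
      simp only [RCLike.re_to_complex] at this
      linarith
    -- at most one positive eigenvalue
    have huniq : ∀ i, i ≠ k → lam i ≤ 0 := by
      intro i hik
      by_contra hcon
      push_neg at hcon
      set u' : Fin d → ℂ := fun j => W j i with hu'def
      set b : ℂ := star φ ⬝ᵥ u' with hbdef
      have heigk : A *ᵥ u = (lam k : ℂ) • u := col_eigen hA k
      have heigi : A *ᵥ u' = (lam i : ℂ) • u' := col_eigen hA i
      have huu : star u ⬝ᵥ u = 1 := (col_orth hA k k).trans (if_pos rfl)
      have hu'u' : star u' ⬝ᵥ u' = 1 := (col_orth hA i i).trans (if_pos rfl)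
      have huu' : star u ⬝ᵥ u' = 0 := (col_orth hA k i).trans (if_neg hik.symm)
      have hu'u : star u' ⬝ᵥ u = 0 := (col_orth hA i k).trans (if_neg hik)
      set w : Fin d → ℂ := b • u - a • u' with hwdef
      have hφw : star φ ⬝ᵥ w = 0 := by
        rw [hwdef, dotProduct_sub, dotProduct_smul, dotProduct_smul, ← hadef, ← hbdef]
        simp [mul_comm]
      have hAw : A *ᵥ w = (b * (lam k : ℂ)) • u - (a * (lam i : ℂ)) • u' := by
        rw [hwdef, Matrix.mulVec_sub, Matrix.mulVec_smul, Matrix.mulVec_smul, heigk, heigi,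
          smul_smul, smul_smul]
      have hwAw : star w ⬝ᵥ (A *ᵥ w)
          = ((Complex.normSq b * lam k + Complex.normSq a * lam i : ℝ) : ℂ) := by
        have habc : ∀ (z : ℂ) (r : ℝ), star z * (z * (r:ℂ)) = ((Complex.normSq z * r : ℝ) : ℂ) := by
          intro z r
          rw [show star z * (z * (r:ℂ)) = (star z * z) * (r:ℂ) by ring, RCLike.star_def,
            Complex.conj_mul', Complex.normSq_eq_norm_sq]
          push_cast
          ring
        rw [hAw, hwdef]
        simp only [star_sub, star_smul, sub_dotProduct, dotProduct_sub, smul_dotProduct,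
          dotProduct_smul, smul_eq_mul, huu, hu'u', hu'u, huu', mul_one, mul_zero, sub_zero,
          zero_sub, mul_neg, neg_neg, sub_neg_eq_add]
        have e1 := habc b (lam k)
        have e2 := habc a (lam i)
        push_cast at e1 e2 ⊢
        linear_combination e1 + e2
      have hle := hneg w hφw
      rw [hwAw] at hle
      simp only [Complex.ofReal_re] at hle
      have hb0 : Complex.normSq b = 0 ∧ Complex.normSq a = 0 := by
        constructor <;> nlinarith [Complex.normSq_nonneg a, Complex.normSq_nonneg b, hk, hcon,
          mul_nonneg (Complex.normSq_nonneg a) hcon.le,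
          mul_nonneg (Complex.normSq_nonneg b) hk.le]
      have ha0 : a = 0 := Complex.normSq_eq_zero.mp hb0.2
      -- now u itself is φ-orthogonal with positive quadratic form
      have hφu : star φ ⬝ᵥ u = 0 := by rw [← hadef, ha0]
      have := hneg u hφu
      rw [heigk, dotProduct_smul, huu, smul_eq_mul, mul_one] at this
      simp only [Complex.ofReal_re] at this
      linarith
    -- sum of absolute values
    have hsum2 : ∑ i, |lam i| = 2 * lam k := by
      have h1 : lam k + ∑ i ∈ Finset.univ.erase k, lam i = ∑ i, lam i := by
        simpa using Finset.add_sum_erase Finset.univ lam (Finset.mem_univ k)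
      have h2 : |lam k| + ∑ i ∈ Finset.univ.erase k, |lam i| = ∑ i, |lam i| := by
        simpa using Finset.add_sum_erase Finset.univ (fun i => |lam i|) (Finset.mem_univ k)
      have h3 : ∑ i ∈ Finset.univ.erase k, |lam i| = - ∑ i ∈ Finset.univ.erase k, lam i := by
        rw [← Finset.sum_neg_distrib]
        exact Finset.sum_congr rfl fun i hi => abs_of_nonpos (huniq i (Finset.ne_of_mem_erase hi))
      rw [htr0] at h1
      rw [← h2, h3, abs_of_pos hk]
      linarith
    -- scalar facts
    have hxk : xx k = x := by
      have h1 : ((Wᴴ : Matrix (Fin d) (Fin d) ℂ) *ᵥ φ) k = star u ⬝ᵥ φ := by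
        simp [mulVec, dotProduct, conjTranspose_apply, hudef]
      rw [hxxdef]
      simp only [h1]
      rw [star_dotProduct_conj u φ, ← hadef, Complex.normSq_conj, hxdef]
    have heigk : A *ᵥ u = (lam k : ℂ) • u := col_eigen hA k
    have huu : star u ⬝ᵥ u = 1 := (col_orth hA k k).trans (if_pos rfl)
    have hσeq : σ = proj φ - A := by rw [hAdef, sub_sub_cancel]
    have hσu : σ *ᵥ u = a • φ - (lam k : ℂ) • u := by
      rw [hσeq, Matrix.sub_mulVec, proj_mulVec, heigk, ← hadef]
    have h2c : star u ⬝ᵥ (σ *ᵥ u) = ((x : ℂ) - (lam k : ℂ)) := by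
      rw [hσu, dotProduct_sub, dotProduct_smul, dotProduct_smul, huu,
        star_dotProduct_conj u φ, ← hadef]
      rw [smul_eq_mul, smul_eq_mul, mul_one, Complex.mul_conj, hxdef]
    have hlx : lam k ≤ x := by
      have := hσ.re_dotProduct_nonneg u
      simp only [RCLike.re_to_complex] at this
      rw [h2c] at this
      simp only [Complex.sub_re, Complex.ofReal_re] at this
      linarith
    have hx1 : x ≤ 1 := by
      rw [← hxk]
      have := Finset.single_le_sum (fun j (_ : j ∈ Finset.univ) => hxx0 j) (Finset.mem_univ k)
      rw [hxxsum] at this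
      exact this
    have h3c : star φ ⬝ᵥ (σ *ᵥ u) = a * (1 - (lam k : ℂ)) := by
      rw [hσu, dotProduct_sub, dotProduct_smul, dotProduct_smul, hφ, ← hadef]
      rw [smul_eq_mul, smul_eq_mul, mul_one]
      ring
    -- Cauchy-Schwarz
    have hCS : x * (1 - lam k)^2 ≤ F * (x - lam k) := by
      set B : Matrix (Fin d) (Fin d) ℂ := hσ.sqrt with hBdef
      have hBh : Bᴴ = B := hσ.posSemidef_sqrt.1
      have hfact : ∀ v w : Fin d → ℂ, star v ⬝ᵥ (σ *ᵥ w) = star (B *ᵥ v) ⬝ᵥ (B *ᵥ w) := by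
        intro v w
        conv_lhs => rw [← hσ.sqrt_mul_self, ← hBdef, ← Matrix.mulVec_mulVec,
          Matrix.dotProduct_mulVec]
        congr 1
        rw [Matrix.star_mulVec, hBh]
      have hcs := dot_cs (B *ᵥ φ) (B *ᵥ u)
      rw [← hfact φ u, ← hfact φ φ, ← hfact u u] at hcs
      rw [h3c, h2c, ← hFdef] at hcs
      have habs : ‖a * (1 - (lam k : ℂ))‖ ^ 2 = x * (1 - lam k)^2 := by
        rw [norm_mul, mul_pow, Complex.sq_norm, ← hxdef]
        congr 1
        rw [show (1 : ℂ) - (lam k : ℂ) = ((1 - lam k : ℝ) : ℂ) by push_cast; ring,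
          Complex.norm_real, Real.norm_eq_abs, _root_.sq_abs]
      rw [habs] at hcs
      have hre : ((x : ℂ) - (lam k : ℂ)).re = x - lam k := by
        simp
      rw [hre] at hcs
      exact hcs
    -- upper bound on F
    have hF5 : F ≤ 1 + lam k - 2 * lam k * x := by
      have herase_lam : ∑ i ∈ Finset.univ.erase k, lam i = - lam k := by
        have h1 : lam k + ∑ i ∈ Finset.univ.erase k, lam i = ∑ i, lam i := by
          simpa using Finset.add_sum_erase Finset.univ lam (Finset.mem_univ k)
        rw [htr0] at h1
        linarith
      have hterm : ∀ i ∈ Finset.univ.erase k, lam i * (1 - x) ≤ lam i * xx i := by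
        intro i hi
        have h1 : lam i ≤ 0 := huniq i (Finset.ne_of_mem_erase hi)
        have h2 : xx i ≤ 1 - x := by
          have hsplit : xx k + ∑ j ∈ Finset.univ.erase k, xx j = 1 := by
            rw [Finset.add_sum_erase _ _ (Finset.mem_univ k), hxxsum]
          have h3 : xx i ≤ ∑ j ∈ Finset.univ.erase k, xx j :=
            Finset.single_le_sum (fun j _ => hxx0 j) hi
          rw [hxk] at hsplit
          linarith
        exact mul_le_mul_of_nonpos_left h2 h1
      have hsumerase : ∑ i ∈ Finset.univ.erase k, lam i * (1 - x)
          ≤ ∑ i ∈ Finset.univ.erase k, lam i * xx i := Finset.sum_le_sum hterm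
      have hsummul : ∑ i ∈ Finset.univ.erase k, lam i * (1 - x) = (- lam k) * (1 - x) := by
        rw [← Finset.sum_mul, herase_lam]
      have hsplit2 : lam k * xx k + ∑ i ∈ Finset.univ.erase k, lam i * xx i
          = ∑ i, lam i * xx i := by
        simpa using Finset.add_sum_erase Finset.univ (fun i => lam i * xx i) (Finset.mem_univ k)
      rw [hxk] at hsplit2
      rw [hquadA] at hsplit2
      nlinarith [hsumerase, hsummul, hsplit2]
    have hfin := scalar_step (lam k) x F hCS hF5 hk hlx hx1 hF0
    rw [hsum2]
    nlinarith [hfin]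

end Key

section Main

variable {d : ℕ}

lemma mulVec_sum' {ι : Type*} (s : Finset ι) (f : ι → Matrix (Fin d) (Fin d) ℂ) (x : Fin d → ℂ) :
    (∑ i ∈ s, f i) *ᵥ x = ∑ i ∈ s, f i *ᵥ x := by
  ext j
  simp only [mulVec, dotProduct, Matrix.sum_apply, Finset.sum_apply, Finset.sum_mul]
  rw [Finset.sum_comm]

lemma dotProduct_sum' {ι : Type*} (s : Finset ι) (v : Fin d → ℂ) (f : ι → Fin d → ℂ) :
    v ⬝ᵥ (∑ i ∈ s, f i) = ∑ i ∈ s, v ⬝ᵥ f i := by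
  simp only [dotProduct, Finset.sum_apply, Finset.mul_sum]
  rw [Finset.sum_comm]

lemma posSemidef_sum {ι : Type*} (s : Finset ι) (f : ι → Matrix (Fin d) (Fin d) ℂ)
    (h : ∀ i, (f i).PosSemidef) : (∑ i ∈ s, f i).PosSemidef := by
  refine Matrix.PosSemidef.of_dotProduct_mulVec_nonneg ?_ ?_
  · have h1 : (∑ i ∈ s, f i)ᴴ = ∑ i ∈ s, (f i)ᴴ := Matrix.conjTranspose_sum s f
    rw [Matrix.IsHermitian, h1]
    exact Finset.sum_congr rfl fun i _ => (h i).1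
  · intro x
    rw [mulVec_sum', dotProduct_sum']
    exact Finset.sum_nonneg fun i _ => (h i).dotProduct_mulVec_nonneg x

lemma posSemidef_smul {c : ℝ} (hc : 0 ≤ c) {M : Matrix (Fin d) (Fin d) ℂ} (hM : M.PosSemidef) :
    ((c : ℂ) • M).PosSemidef := by
  refine Matrix.PosSemidef.of_dotProduct_mulVec_nonneg ?_ ?_
  · rw [Matrix.IsHermitian, Matrix.conjTranspose_smul, Complex.star_def, Complex.conj_ofReal,
      hM.1]
  · intro x
    rw [Matrix.smul_mulVec, dotProduct_smul, smul_eq_mul]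
    exact mul_nonneg (Complex.zero_le_real.2 hc) (hM.dotProduct_mulVec_nonneg x)

lemma channel_psd {F : Matrix (Fin d) (Fin d) ℂ → Matrix (Fin d) (Fin d) ℂ}
    (hF : IsQuantumChannel F) (ψ : Fin d → ℂ) : (F (proj ψ)).PosSemidef := by
  obtain ⟨m, K, hKF, hK1⟩ := hF
  rw [hKF]
  exact posSemidef_sum _ _ fun i => (proj_posSemidef ψ).mul_mul_conjTranspose_same (K i)

lemma channel_trace {F : Matrix (Fin d) (Fin d) ℂ → Matrix (Fin d) (Fin d) ℂ}
    (hF : IsQuantumChannel F) (ψ : Fin d → ℂ) (hψ : star ψ ⬝ᵥ ψ = 1) :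
    (F (proj ψ)).trace = 1 := by
  obtain ⟨m, K, hKF, hK1⟩ := hF
  rw [hKF, Matrix.trace_sum]
  have h1 : ∀ i, (K i * proj ψ * (K i)ᴴ).trace = ((K i)ᴴ * K i * proj ψ).trace := by
    intro i
    rw [Matrix.trace_mul_cycle]
  rw [Finset.sum_congr rfl fun i _ => h1 i, ← Matrix.trace_sum, ← Finset.sum_mul, hK1,
    Matrix.one_mul, trace_proj, hψ]

lemma conj_proj (U : Matrix (Fin d) (Fin d) ℂ) (ψ : Fin d → ℂ) :
    U * proj ψ * Uᴴ = proj (U *ᵥ ψ) := by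
  ext i j
  simp only [proj, vecMulVec, Matrix.mul_apply, Matrix.conjTranspose_apply, mulVec, dotProduct,
    Pi.star_apply, RCLike.star_def, map_sum, _root_.map_mul, Finset.mul_sum, Finset.sum_mul,
    of_apply]
  apply Finset.sum_congr rfl
  intro l _
  apply Finset.sum_congr rfl
  intro m _
  ring

lemma unit_mulVec {U : Matrix (Fin d) (Fin d) ℂ} (hU : U ∈ Matrix.unitaryGroup (Fin d) ℂ)
    {ψ : Fin d → ℂ} (hψ : star ψ ⬝ᵥ ψ = 1) : star (U *ᵥ ψ) ⬝ᵥ (U *ᵥ ψ) = 1 := by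
  rw [Matrix.star_mulVec, ← Matrix.dotProduct_mulVec, Matrix.mulVec_mulVec]
  have hU1 : Uᴴ * U = 1 := by
    have := Matrix.mem_unitaryGroup_iff'.mp hU
    rwa [Matrix.star_eq_conjTranspose] at this
  rw [hU1, Matrix.one_mulVec, hψ]

lemma unit_conv (ψ : Fin d → ℂ) (h : ∑ i, ‖ψ i‖ ^ 2 = 1) :
    star ψ ⬝ᵥ ψ = 1 := by
  have h1 : star ψ ⬝ᵥ ψ = ((∑ i, ‖ψ i‖ ^ 2 : ℝ) : ℂ) := by
    push_cast
    simp only [dotProduct, Pi.star_apply]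
    congr 1
    funext i
    rw [RCLike.star_def, Complex.conj_mul']
  rw [h1, h]
  exact Complex.ofReal_one

end Main

/-- Mean-squared-error bound: if the average of channels `F_j` (with probabilities `p_j`)
approximates the unitary evolution `ρ ↦ UρU†` within trace-norm error `Δ` on every pure state,
then the mean squared trace-norm error on every pure state is at most `2Δ`. -/
theorem mean_squared_error_bound {d : ℕ} {J : Type*} [Fintype J]
    (U : Matrix (Fin d) (Fin d) ℂ) (hU : U ∈ Matrix.unitaryGroup (Fin d) ℂ)
    (F : J → Matrix (Fin d) (Fin d) ℂ → Matrix (Fin d) (Fin d) ℂ)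
    (hF : ∀ j, IsQuantumChannel (F j))
    (p : J → ℝ) (hp : ∀ j, 0 ≤ p j) (hp1 : ∑ j, p j = 1)
    (Δ : ℝ) (hΔ : 0 < Δ)
    (herr : ∀ ψ : Fin d → ℂ, ∑ i, ‖ψ i‖ ^ 2 = 1 →
      traceNorm (U * proj ψ * Uᴴ - ∑ j, (p j : ℂ) • F j (proj ψ)) ≤ Δ) :
    ∀ ψ : Fin d → ℂ, ∑ i, ‖ψ i‖ ^ 2 = 1 →
      ∑ j, p j * traceNorm (U * proj ψ * Uᴴ - F j (proj ψ)) ^ 2 ≤ 2 * Δ := by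
  intro ψ hψ
  have hψ1 : star ψ ⬝ᵥ ψ = 1 := unit_conv ψ hψ
  set φ : Fin d → ℂ := U *ᵥ ψ with hφdef
  have hφ1 : star φ ⬝ᵥ φ = 1 := unit_mulVec hU hψ1
  have hconj : U * proj ψ * Uᴴ = proj φ := conj_proj U ψ
  have hσpsd : ∀ j, (F j (proj ψ)).PosSemidef := fun j => channel_psd (hF j) ψ
  have hσtr : ∀ j, (F j (proj ψ)).trace = 1 := fun j => channel_trace (hF j) ψ hψ1
  set σbar : Matrix (Fin d) (Fin d) ℂ := ∑ j, (p j : ℂ) • F j (proj ψ) with hσbardef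
  have hσbarpsd : σbar.PosSemidef :=
    posSemidef_sum _ _ fun j => posSemidef_smul (hp j) (hσpsd j)
  have hσbartr : σbar.trace = 1 := by
    rw [hσbardef, Matrix.trace_sum]
    have h2 : ∀ j, ((p j : ℂ) • F j (proj ψ)).trace = (p j : ℂ) := by
      intro j
      rw [Matrix.trace_smul, hσtr j, smul_eq_mul, mul_one]
    rw [Finset.sum_congr rfl fun j _ => h2 j]
    exact_mod_cast congrArg (fun r : ℝ => (r : ℂ)) hp1
  have hbar : (star φ ⬝ᵥ (σbar *ᵥ φ)).re
      = ∑ j, p j * (star φ ⬝ᵥ (F j (proj ψ) *ᵥ φ)).re := by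
    rw [hσbardef, mulVec_sum', dotProduct_sum', Complex.re_sum]
    apply Finset.sum_congr rfl
    intro j _
    rw [Matrix.smul_mulVec, dotProduct_smul, smul_eq_mul]
    simp [Complex.mul_re]
  calc ∑ j, p j * traceNorm (U * proj ψ * Uᴴ - F j (proj ψ)) ^ 2
      = ∑ j, p j * traceNorm (proj φ - F j (proj ψ)) ^ 2 := by simp only [hconj]
    _ ≤ ∑ j, p j * (4 * (1 - (star φ ⬝ᵥ (F j (proj ψ) *ᵥ φ)).re)) := by
        apply Finset.sum_le_sum
        intro j _
        exact mul_le_mul_of_nonneg_left (key_upper φ hφ1 (hσpsd j) (hσtr j)) (hp j)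
    _ = 4 * (1 - (star φ ⬝ᵥ (σbar *ᵥ φ)).re) := by
        rw [hbar]
        have : ∑ j, p j * (4 * (1 - (star φ ⬝ᵥ (F j (proj ψ) *ᵥ φ)).re))
            = 4 * (∑ j, p j) - 4 * ∑ j, p j * (star φ ⬝ᵥ (F j (proj ψ) *ᵥ φ)).re := by
          rw [Finset.mul_sum, Finset.mul_sum, ← Finset.sum_sub_distrib]
          apply Finset.sum_congr rfl
          intro j _
          ring
        rw [this, hp1]
        ring
    _ ≤ 2 * Δ := by
        have hlow := key_lower φ hφ1 hσbarpsd.1 hσbartr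
        have herr' := herr ψ hψ
        rw [hconj] at herr'
        rw [← hσbardef] at herr'
        linarith
end

section
/- Let H₀ be a Hermitian operator with eigenvalues {E_m} and let f, g : ℝ → ℝ be functions. For any unit vector |ψ⟩ = ∑_{s,m} a_{s,m} |s⟩|E_m⟩|ψ_{s,m}⟩ (where |s⟩ ∈ {|+⟩,|−⟩} are eigenvectors of the Pauli X operator with eigenvalues ±1, |E_m⟩ are eigenvectors of H₀, and |ψ_{s,m}⟩ are unit vectors of an auxiliary space), one has |⟨ψ| e^{−i X ⊗ (f(H₀) − g(H₀)) t} ⊗ I |ψ⟩| ≥ cos(t · max_m |f(E_m) − g(E_m)|), provided t · max_m |f(E_m) − g(E_m)| ≤ π. -/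
open Matrix Complex Real
open scoped Kronecker

/-- Matrix-element bound used in the Fourier series simulation error analysis: for a Hermitian
`H₀` with spectral decomposition `H₀ = ∑_m E_m |E_m⟩⟨E_m|` (realized diagonally in its eigenbasis
`m`), any functions `f, g`, any `t` with `t · max_m |f(E_m) - g(E_m)| ≤ π`, and any unit
vector `ψ` of the control ⊗ system ⊗ auxiliary space,
`|⟨ψ| e^{-i X⊗(f(H₀)-g(H₀)) t} ⊗ I |ψ⟩| ≥ cos(t · max_m |f(E_m) - g(E_m)|)`. -/
theorem matrix_element_cos_bound {m aux : Type*} [Fintype m] [DecidableEq m] [Nonempty m]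
    [Fintype aux] [DecidableEq aux]
    (E : m → ℝ) (f g : ℝ → ℝ) (t : ℝ) (ht : 0 < t)
    (hbound : t * (Finset.univ.sup' Finset.univ_nonempty fun j => |f (E j) - g (E j)|) ≤ π)
    (ψ : (Fin 2 × m) × aux → ℂ) (hψ : ∑ i, ‖ψ i‖ ^ 2 = 1) :
    Real.cos (t * (Finset.univ.sup' Finset.univ_nonempty fun j => |f (E j) - g (E j)|))
      ≤ ‖star ψ ⬝ᵥ
          ((NormedSpace.exp ((-(Complex.I * (t : ℂ))) •
              ((!![0, 1; 1, 0] : Matrix (Fin 2) (Fin 2) ℂ) ⊗ₖ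
                Matrix.diagonal fun j => ((f (E j) - g (E j) : ℝ) : ℂ)))) ⊗ₖ
            (1 : Matrix aux aux ℂ)).mulVec ψ‖ := by
  classical
  set Mx : ℝ := Finset.univ.sup' Finset.univ_nonempty fun j => |f (E j) - g (E j)| with hMx
  set d : m → ℝ := fun j => f (E j) - g (E j) with hd
  set h : ℂ := (((Real.sqrt 2)⁻¹ : ℝ) : ℂ) with hh
  set H : Matrix (Fin 2) (Fin 2) ℂ := h • !![1, 1; 1, -1] with hHdef
  have hhh : h * h = 2⁻¹ := by
    rw [hh, ← Complex.ofReal_mul, ← mul_inv, Real.mul_self_sqrt (by norm_num)]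
    norm_num
  have hH2 : H * H = 1 := by
    ext i j
    fin_cases i <;> fin_cases j <;>
      simp [hHdef, Matrix.mul_apply, Fin.sum_univ_two, Matrix.one_apply] <;>
      linear_combination 2 * hhh
  set εr : Fin 2 → ℝ := ![1, -1] with hεr
  set εc : Fin 2 → ℂ := fun s => ((εr s : ℝ) : ℂ) with hεc
  have hdiagεc : Matrix.diagonal εc = !![(1:ℂ), 0; 0, -1] := by
    ext i j
    fin_cases i <;> fin_cases j <;> simp [hεc, hεr, Matrix.diagonal_apply]
  have hHXH : H * Matrix.diagonal εc * H = !![0, 1; 1, 0] := by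
    rw [hdiagεc]
    ext i j
    fin_cases i <;> fin_cases j <;>
      simp [hHdef, Matrix.mul_apply, Fin.sum_univ_two] <;>
      linear_combination 2 * hhh
  set c : m → ℂ := fun j => ((d j : ℝ) : ℂ) with hc
  set Qm : Matrix (Fin 2 × m) (Fin 2 × m) ℂ := H ⊗ₖ (1 : Matrix m m ℂ) with hQm
  set Λ : Fin 2 × m → ℂ := fun p => -(Complex.I * (t : ℂ)) * (εc p.1 * c p.2) with hΛ
  have key1 : (!![0, 1; 1, 0] : Matrix (Fin 2) (Fin 2) ℂ) ⊗ₖ Matrix.diagonal c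
      = Qm * Matrix.diagonal (fun p : Fin 2 × m => εc p.1 * c p.2) * Qm := by
    rw [← hHXH, ← Matrix.diagonal_kronecker_diagonal, hQm,
      ← Matrix.mul_kronecker_mul, ← Matrix.mul_kronecker_mul]
    simp
  have key2 : (-(Complex.I * (t : ℂ))) •
      ((!![0, 1; 1, 0] : Matrix (Fin 2) (Fin 2) ℂ) ⊗ₖ Matrix.diagonal c)
      = Qm * Matrix.diagonal Λ * Qm := by
    have hdl : Matrix.diagonal Λ = (-(Complex.I * (t : ℂ))) •
        Matrix.diagonal (fun p : Fin 2 × m => εc p.1 * c p.2) := by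
      rw [← Matrix.diagonal_smul]
      rfl
    rw [key1, hdl, Matrix.mul_smul, Matrix.smul_mul]
  have hQm2 : Qm * Qm = 1 := by
    rw [hQm, ← Matrix.mul_kronecker_mul, hH2, Matrix.one_mul, Matrix.one_kronecker_one]
  set QU : (Matrix (Fin 2 × m) (Fin 2 × m) ℂ)ˣ := ⟨Qm, Qm, hQm2, hQm2⟩ with hQU
  have hexp : NormedSpace.exp ((-(Complex.I * (t : ℂ))) •
      ((!![0, 1; 1, 0] : Matrix (Fin 2) (Fin 2) ℂ) ⊗ₖ Matrix.diagonal c))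
      = Qm * Matrix.diagonal (fun p => Complex.exp (Λ p)) * Qm := by
    rw [key2]
    have h1 := Matrix.exp_units_conj QU (Matrix.diagonal Λ)
    have h2 : ((QU⁻¹ : (Matrix (Fin 2 × m) (Fin 2 × m) ℂ)ˣ) : Matrix (Fin 2 × m) (Fin 2 × m) ℂ) = Qm := rfl
    rw [h2] at h1
    have h3 : ((QU : (Matrix (Fin 2 × m) (Fin 2 × m) ℂ)ˣ) : Matrix (Fin 2 × m) (Fin 2 × m) ℂ) = Qm := rfl
    rw [h3] at h1
    rw [h1, Matrix.exp_diagonal, Pi.exp_def]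
    simp [← Complex.exp_eq_exp_ℂ]
  set Q : Matrix ((Fin 2 × m) × aux) ((Fin 2 × m) × aux) ℂ := Qm ⊗ₖ (1 : Matrix aux aux ℂ) with hQ
  set Dv : (Fin 2 × m) × aux → ℂ := fun q => Complex.exp (Λ q.1) with hDv
  have hfull : (NormedSpace.exp ((-(Complex.I * (t : ℂ))) •
      ((!![0, 1; 1, 0] : Matrix (Fin 2) (Fin 2) ℂ) ⊗ₖ Matrix.diagonal c))) ⊗ₖ
      (1 : Matrix aux aux ℂ) = Q * Matrix.diagonal Dv * Q := by
    rw [hexp]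
    conv_lhs => rw [show (1 : Matrix aux aux ℂ) = 1 * 1 * 1 by simp]
    rw [Matrix.mul_kronecker_mul, Matrix.mul_kronecker_mul, hQ]
    congr 1
    congr 1
    rw [show (1 : Matrix aux aux ℂ) = Matrix.diagonal (fun _ => (1:ℂ)) from Matrix.diagonal_one.symm,
      Matrix.diagonal_kronecker_diagonal]
    simp [hDv]
  have hQ2 : Q * Q = 1 := by
    rw [hQ, ← Matrix.mul_kronecker_mul, hQm2, Matrix.one_mul, Matrix.one_kronecker_one]
  have hQH : Qᴴ = Q := by
    rw [hQ, hQm]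
    ext q q'
    obtain ⟨⟨s, j⟩, a⟩ := q
    obtain ⟨⟨s', j'⟩, a'⟩ := q'
    fin_cases s <;> fin_cases s' <;>
      simp [Matrix.conjTranspose_apply, hHdef, hh, Matrix.one_apply, eq_comm,
        apply_ite (starRingEnd ℂ), map_inv₀, Complex.conj_ofReal]
  set φ : (Fin 2 × m) × aux → ℂ := Q *ᵥ ψ with hφ
  have hstarφ : star φ = star ψ ᵥ* Q := by rw [hφ, Matrix.star_mulVec, hQH]
  have hval : star ψ ⬝ᵥ (Q * Matrix.diagonal Dv * Q) *ᵥ ψ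
      = star φ ⬝ᵥ (Matrix.diagonal Dv) *ᵥ φ := by
    rw [hstarφ, hφ, Matrix.mulVec_mulVec, Matrix.dotProduct_mulVec, Matrix.dotProduct_mulVec,
      Matrix.vecMul_vecMul, Matrix.mul_assoc]
  have hψ' : ∑ q, Complex.normSq (ψ q) = 1 := by
    simpa [Complex.sq_norm] using hψ
  have hφnorm : ∑ q, Complex.normSq (φ q) = 1 := by
    have h1 : star φ ⬝ᵥ φ = star ψ ⬝ᵥ ψ := by
      rw [hstarφ, hφ, Matrix.dotProduct_mulVec, Matrix.vecMul_vecMul, hQ2, Matrix.vecMul_one]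
    have h2 : ((∑ q, Complex.normSq (φ q) : ℝ) : ℂ) = ((∑ q, Complex.normSq (ψ q) : ℝ) : ℂ) := by
      push_cast
      simpa [dotProduct, Complex.normSq_eq_conj_mul_self] using h1
    have h3 : ∑ q, Complex.normSq (φ q) = ∑ q, Complex.normSq (ψ q) := by exact_mod_cast h2
    rw [h3, hψ']
  have hdot : star φ ⬝ᵥ (Matrix.diagonal Dv) *ᵥ φ
      = ∑ q, Complex.exp (Λ q.1) * ((Complex.normSq (φ q) : ℝ) : ℂ) := by
    unfold dotProduct
    apply Finset.sum_congr rfl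
    intro q _
    rw [Matrix.mulVec_diagonal, hDv]
    have hns : ((Complex.normSq (φ q) : ℝ) : ℂ) = star (φ q) * φ q := by
      rw [Complex.normSq_eq_conj_mul_self]; rfl
    rw [hns]
    simp only [Pi.star_apply]
    ring
  have hre : (∑ q, Complex.exp (Λ q.1) * ((Complex.normSq (φ q) : ℝ) : ℂ)).re
      = ∑ q, Real.cos (t * (εr q.1.1 * d q.1.2)) * Complex.normSq (φ q) := by
    rw [Complex.re_sum]
    apply Finset.sum_congr rfl
    intro q _
    have hΛq : Λ q.1 = ((-(t * (εr q.1.1 * d q.1.2)) : ℝ) : ℂ) * Complex.I := by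
      rw [hΛ]
      simp only [hεc, hc]
      push_cast
      ring
    rw [hΛq, Complex.mul_re, Complex.exp_ofReal_mul_I_re]
    simp [Real.cos_neg]
  have hcosle : ∀ q : (Fin 2 × m) × aux,
      Real.cos (t * Mx) ≤ Real.cos (t * (εr q.1.1 * d q.1.2)) := by
    intro q
    have he : |εr q.1.1| = 1 := by
      rcases q with ⟨⟨s, j⟩, a⟩
      fin_cases s <;> simp [hεr]
    have h1 : |t * (εr q.1.1 * d q.1.2)| ≤ t * Mx := by
      rw [abs_mul, abs_mul, abs_of_pos ht, he, one_mul]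
      exact mul_le_mul_of_nonneg_left
        (Finset.le_sup' (fun j => |f (E j) - g (E j)|) (Finset.mem_univ q.1.2)) ht.le
    calc Real.cos (t * Mx) ≤ Real.cos |t * (εr q.1.1 * d q.1.2)| :=
          Real.cos_le_cos_of_nonneg_of_le_pi (abs_nonneg _) hbound h1
      _ = _ := Real.cos_abs _
  have hsum : Real.cos (t * Mx)
      ≤ ∑ q, Real.cos (t * (εr q.1.1 * d q.1.2)) * Complex.normSq (φ q) := by
    calc Real.cos (t * Mx) = ∑ q, Real.cos (t * Mx) * Complex.normSq (φ q) := by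
          rw [← Finset.mul_sum, hφnorm, mul_one]
      _ ≤ _ := Finset.sum_le_sum fun q _ =>
          mul_le_mul_of_nonneg_right (hcosle q) (Complex.normSq_nonneg _)
  rw [hfull]
  calc Real.cos (t * Mx)
      ≤ (∑ q, Complex.exp (Λ q.1) * ((Complex.normSq (φ q) : ℝ) : ℂ)).re := by
        rw [hre]; exact hsum
    _ = (star ψ ⬝ᵥ (Q * Matrix.diagonal Dv * Q) *ᵥ ψ).re := by rw [hval, hdot]
    _ ≤ ‖star ψ ⬝ᵥ (Q * Matrix.diagonal Dv * Q) *ᵥ ψ‖ := Complex.re_le_norm _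
end

section
/- Let g_0,…,g_{n−1} be complex numbers, not all zero, and let x_0 < x_1 < ⋯ < x_{n−1} be real numbers in [−1,1) with pairwise distinct values, and set Δ := sin[(π/2) · min_{m₁ < m₂} min(x_{m₂} − x_{m₁}, 2 − (x_{m₂} − x_{m₁}))] > 0. Then for every integer k₀ and every positive integer M, ∑_{k=k₀}^{k₀+M−1} |∑_{m=0}^{n−1} g_m e^{−iπk x_m}|² ≥ M ∑_m |g_m|² − (1/Δ)(∑_m |g_m|)². -/
open Complex Real Finset

private lemma abs_exp_I_sub_one (θ : ℝ) :
    ‖Complex.exp ((θ:ℂ) * Complex.I) - 1‖ = 2 * |Real.sin (θ / 2)| := by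
  rw [Complex.exp_mul_I, ← Complex.ofReal_cos, ← Complex.ofReal_sin,
    Complex.norm_def, Complex.normSq_apply]
  have h1 : Real.cos θ = 1 - 2 * Real.sin (θ/2) ^ 2 := by
    have h := Real.cos_two_mul (θ/2)
    have h2 : Real.sin (θ/2) ^ 2 + Real.cos (θ/2) ^ 2 = 1 := Real.sin_sq_add_cos_sq _
    rw [show 2 * (θ/2) = θ by ring] at h
    linarith
  have h2 : Real.sin θ ^ 2 + Real.cos θ ^ 2 = 1 := Real.sin_sq_add_cos_sq θ
  have hre : ((Real.cos θ : ℂ) + (Real.sin θ : ℂ) * Complex.I - 1).re = Real.cos θ - 1 := by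
    simp [Complex.cos_ofReal_re, Complex.sin_ofReal_re]
  have him : ((Real.cos θ : ℂ) + (Real.sin θ : ℂ) * Complex.I - 1).im = Real.sin θ := by
    simp [Complex.cos_ofReal_re, Complex.sin_ofReal_re]
  rw [hre, him,
    show (Real.cos θ - 1) * (Real.cos θ - 1) + Real.sin θ * Real.sin θ
      = (2 * |Real.sin (θ/2)|)^2 by rw [mul_pow, _root_.sq_abs]; nlinarith]
  exact Real.sqrt_sq (by positivity)

private lemma geom_bound (q : ℝ) (hq : Real.sin (π * q / 2) ≠ 0) (k₀ : ℤ) (M : ℕ) :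
    ‖∑ k ∈ Finset.range M,
        Complex.exp (-Complex.I * π * ((k₀:ℂ)+(k:ℂ)) * (q:ℂ))‖
      ≤ 1 / |Real.sin (π * q / 2)| := by
  set z : ℂ := Complex.exp (((-(π * q) : ℝ) : ℂ) * Complex.I) with hz
  have habs_z : ‖z‖ = 1 := Complex.norm_exp_ofReal_mul_I _
  have hz1abs : ‖z - 1‖ = 2 * |Real.sin (π * q / 2)| := by
    rw [abs_exp_I_sub_one]
    rw [show -(π * q) / 2 = -(π * q / 2) by ring, Real.sin_neg, abs_neg]
  have hz1 : z ≠ 1 := by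
    intro h
    rw [h] at hz1abs
    simp at hz1abs
    exact hq (by linarith [abs_nonneg (Real.sin (π * q / 2)), hz1abs])
  have hterm : ∀ k : ℕ, Complex.exp (-Complex.I * π * ((k₀:ℂ)+(k:ℂ)) * (q:ℂ))
      = Complex.exp (((-(π * q * k₀) : ℝ) : ℂ) * Complex.I) * z ^ k := by
    intro k
    rw [hz, ← Complex.exp_nat_mul, ← Complex.exp_add]
    congr 1
    push_cast
    ring
  rw [Finset.sum_congr rfl (fun k _ => hterm k), ← Finset.mul_sum, norm_mul,
    Complex.norm_exp_ofReal_mul_I, one_mul, geom_sum_eq hz1, norm_div, hz1abs]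
  have h2 : ‖z ^ M - 1‖ ≤ 2 := by
    calc ‖z ^ M - 1‖ ≤ ‖z ^ M‖ + ‖(1:ℂ)‖ := by
          simpa using norm_sub_le (z ^ M) 1
    _ = 2 := by rw [norm_pow, habs_z, one_pow, norm_one]; norm_num
  have hs : 0 < |Real.sin (π * q / 2)| := abs_pos.mpr hq
  rw [div_le_div_iff₀ (by positivity) hs]
  nlinarith

/-- Lower bound on a sum of squared absolute values of exponential sums: for distinct points
`x₀ < ⋯ < x_{n-1}` in `[-1,1)` and complex amplitudes `g_m`, not all zero, with
`Δ = sin((π/2)·min_{m₁<m₂} min(x_{m₂}-x_{m₁}, 2-(x_{m₂}-x_{m₁}))) > 0`, we have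
`∑_{k=k₀}^{k₀+M-1} |∑_m g_m e^{-iπk x_m}|² ≥ M ∑_m |g_m|² - (1/Δ)(∑_m |g_m|)²`. -/
theorem exponential_sum_square_lower_bound {n : ℕ} (hn : 2 ≤ n)
    (g : Fin n → ℂ) (hg : ∃ m, g m ≠ 0)
    (x : Fin n → ℝ) (hx : StrictMono x) (hx' : ∀ m, x m ∈ Set.Ico (-1 : ℝ) 1)
    (hP : (Finset.univ.filter fun p : Fin n × Fin n => p.1 < p.2).Nonempty)
    (Δ : ℝ)
    (hΔ : Δ = Real.sin (π / 2 *
      ((Finset.univ.filter fun p : Fin n × Fin n => p.1 < p.2).inf' hP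
        (fun p => min (x p.2 - x p.1) (2 - (x p.2 - x p.1))))))
    (hΔpos : 0 < Δ) (k₀ : ℤ) (M : ℕ) (hM : 0 < M) :
    (M : ℝ) * ∑ m, ‖g m‖ ^ 2 - (1 / Δ) * (∑ m, ‖g m‖) ^ 2
      ≤ ∑ k ∈ Finset.range M,
          ‖∑ m, g m * Complex.exp (-Complex.I * π * ((k₀ : ℂ) + (k : ℂ)) * (x m : ℂ))‖ ^ 2 := by
  -- Step 0 : the Δ bound on sines of pairwise differences
  have key : ∀ m1 m2 : Fin n, m1 ≠ m2 → Δ ≤ |Real.sin (π * (x m1 - x m2) / 2)| := by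
    set D := (Finset.univ.filter fun p : Fin n × Fin n => p.1 < p.2).inf' hP
          (fun p => min (x p.2 - x p.1) (2 - (x p.2 - x p.1))) with hD
    have hD0 : 0 < D := by
      rw [hD, Finset.lt_inf'_iff]
      intro p hp
      simp only [Finset.mem_filter, Finset.mem_univ, true_and] at hp
      have h12 := hx hp
      have h1 := hx' p.1
      have h2 := hx' p.2
      simp only [Set.mem_Ico] at h1 h2
      exact lt_min (by linarith) (by linarith)
    have hD1 : D ≤ 1 := by
      obtain ⟨p, hp⟩ := hP
      calc D ≤ min (x p.2 - x p.1) (2 - (x p.2 - x p.1)) := Finset.inf'_le _ hp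
      _ ≤ 1 := by rcases le_total (x p.2 - x p.1) 1 with h | h
                  · exact min_le_of_left_le h
                  · exact min_le_of_right_le (by linarith)
    have key' : ∀ m1 m2 : Fin n, m1 < m2 → Δ ≤ Real.sin (π * (x m2 - x m1) / 2) := by
      intro m1 m2 h
      have hp : (m1, m2) ∈ (Finset.univ.filter fun p : Fin n × Fin n => p.1 < p.2) := by
        simp [h]
      have hle : D ≤ min (x m2 - x m1) (2 - (x m2 - x m1)) := Finset.inf'_le _ hp
      set q := x m2 - x m1 with hqdef
      have hq0 : 0 < q := sub_pos.2 (hx h)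
      have hq2 : q < 2 := by
        have h1 := hx' m1; have h2 := hx' m2
        simp only [Set.mem_Ico] at h1 h2
        simp only [hqdef]; linarith
      have hm0 : 0 < min q (2 - q) := lt_min hq0 (by linarith)
      have hm1 : min q (2 - q) ≤ 1 := by
        rcases le_total q 1 with h' | h'
        · exact min_le_of_left_le h'
        · exact min_le_of_right_le (by linarith)
      have hmin : Real.sin (π * q / 2) = Real.sin (π / 2 * min q (2 - q)) := by
        rcases min_cases q (2 - q) with ⟨h1, _⟩ | ⟨h1, _⟩
        · rw [h1]; ring_nf
        · rw [h1, show π / 2 * (2 - q) = π - π * q / 2 by ring, Real.sin_pi_sub]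
      rw [hΔ, hmin]
      have hpi := Real.pi_pos
      apply Real.strictMonoOn_sin.monotoneOn
      · constructor <;> nlinarith
      · constructor <;> nlinarith
      · nlinarith
    intro m1 m2 hne
    rcases lt_or_gt_of_ne hne with h | h
    · have h2 := key' m1 m2 h
      have heq : |Real.sin (π * (x m1 - x m2) / 2)| = |Real.sin (π * (x m2 - x m1) / 2)| := by
        rw [show π * (x m1 - x m2) / 2 = -(π * (x m2 - x m1) / 2) by ring, Real.sin_neg, abs_neg]
      rw [heq]
      exact le_trans h2 (le_abs_self _)
    · exact le_trans (key' m2 m1 h) (le_abs_self _)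
  -- notation
  set T : Fin n → Fin n → ℂ := fun m1 m2 => ∑ k ∈ Finset.range M,
    Complex.exp (-Complex.I * π * ((k₀:ℂ)+(k:ℂ)) * ((x m1 - x m2 : ℝ):ℂ)) with hT
  -- Step 1 : expansion
  have hsum : ∑ k ∈ Finset.range M,
      ‖∑ m, g m * Complex.exp (-Complex.I * π * ((k₀ : ℂ) + (k : ℂ)) * (x m : ℂ))‖ ^ 2
      = (∑ m1, ∑ m2, (g m1 * (starRingEnd ℂ) (g m2)) * T m1 m2).re := by
    have e1 : ∀ k ∈ Finset.range M,
        ‖∑ m, g m * Complex.exp (-Complex.I * π * ((k₀ : ℂ) + (k : ℂ)) * (x m : ℂ))‖ ^ 2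
        = (∑ m1, ∑ m2, (g m1 * (starRingEnd ℂ) (g m2)) *
            Complex.exp (-Complex.I * π * ((k₀:ℂ)+(k:ℂ)) * ((x m1 - x m2 : ℝ):ℂ))).re := by
      intro k _
      rw [Complex.sq_norm]
      rw [show Complex.normSq (∑ m, g m * Complex.exp (-Complex.I * π * ((k₀:ℂ)+(k:ℂ)) * (x m : ℂ)))
          = ((∑ m, g m * Complex.exp (-Complex.I * π * ((k₀:ℂ)+(k:ℂ)) * (x m : ℂ))) *
            (starRingEnd ℂ) (∑ m, g m * Complex.exp (-Complex.I * π * ((k₀:ℂ)+(k:ℂ)) * (x m : ℂ)))).re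
          by rw [Complex.mul_conj, Complex.ofReal_re]]
      congr 1
      rw [map_sum, Finset.sum_mul_sum]
      refine Finset.sum_congr rfl fun m1 _ => Finset.sum_congr rfl fun m2 _ => ?_
      rw [map_mul]
      have hE : Complex.exp (-Complex.I * π * ((k₀:ℂ)+(k:ℂ)) * (x m1 : ℂ)) *
          (starRingEnd ℂ) (Complex.exp (-Complex.I * π * ((k₀:ℂ)+(k:ℂ)) * (x m2 : ℂ)))
          = Complex.exp (-Complex.I * π * ((k₀:ℂ)+(k:ℂ)) * ((x m1 - x m2 : ℝ):ℂ)) := by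
        rw [← Complex.exp_conj, ← Complex.exp_add]
        congr 1
        simp only [map_mul, map_add, map_neg, Complex.conj_I, Complex.conj_ofReal,
          Complex.conj_natCast, map_intCast]
        push_cast
        ring
      rw [← hE]
      ring
    rw [Finset.sum_congr rfl e1, ← Complex.re_sum, Finset.sum_comm]
    congr 1
    refine Finset.sum_congr rfl fun m1 _ => ?_
    rw [Finset.sum_comm]
    exact Finset.sum_congr rfl fun m2 _ => (Finset.mul_sum _ _ _).symm
  rw [hsum]
  have hTdiag : ∀ m : Fin n, T m m = (M : ℂ) := by
    intro m
    rw [hT]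
    simp
  have hdiag : ∀ m : Fin n, (g m * (starRingEnd ℂ) (g m)) * T m m
      = (((‖g m‖ ^ 2 * M : ℝ)) : ℂ) := by
    intro m
    rw [hTdiag, Complex.mul_conj, Complex.normSq_eq_norm_sq]
    push_cast
    ring
  have hsplit : ∑ m1, ∑ m2, (g m1 * (starRingEnd ℂ) (g m2)) * T m1 m2
      = (((M:ℝ) * ∑ m, ‖g m‖ ^ 2 : ℝ) : ℂ)
        + ∑ m1, ∑ m2 ∈ Finset.univ.erase m1, (g m1 * (starRingEnd ℂ) (g m2)) * T m1 m2 := by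
    calc ∑ m1, ∑ m2, (g m1 * (starRingEnd ℂ) (g m2)) * T m1 m2
        = ∑ m1, ((g m1 * (starRingEnd ℂ) (g m1)) * T m1 m1
            + ∑ m2 ∈ Finset.univ.erase m1, (g m1 * (starRingEnd ℂ) (g m2)) * T m1 m2) :=
          Finset.sum_congr rfl fun m1 _ =>
            (Finset.add_sum_erase Finset.univ _ (Finset.mem_univ m1)).symm
      _ = ∑ m1, (g m1 * (starRingEnd ℂ) (g m1)) * T m1 m1
            + ∑ m1, ∑ m2 ∈ Finset.univ.erase m1, (g m1 * (starRingEnd ℂ) (g m2)) * T m1 m2 :=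
          Finset.sum_add_distrib
      _ = (((M:ℝ) * ∑ m, ‖g m‖ ^ 2 : ℝ) : ℂ)
            + ∑ m1, ∑ m2 ∈ Finset.univ.erase m1, (g m1 * (starRingEnd ℂ) (g m2)) * T m1 m2 := by
          congr 1
          rw [Finset.sum_congr rfl fun m _ => hdiag m]
          push_cast
          rw [Finset.mul_sum]
          exact Finset.sum_congr rfl fun m _ => by ring
  set Off := ∑ m1, ∑ m2 ∈ Finset.univ.erase m1, (g m1 * (starRingEnd ℂ) (g m2)) * T m1 m2 with hOffdef
  rw [hsplit, Complex.add_re, Complex.ofReal_re]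
  have hOffbound : ‖Off‖ ≤ (1/Δ) * (∑ m, ‖g m‖)^2 := by
    have hTbound : ∀ m1 m2 : Fin n, m1 ≠ m2 → ‖T m1 m2‖ ≤ 1/Δ := by
      intro m1 m2 hne
      have hk := key m1 m2 hne
      have hspos : 0 < |Real.sin (π * (x m1 - x m2) / 2)| := lt_of_lt_of_le hΔpos hk
      have hsne : Real.sin (π * (x m1 - x m2) / 2) ≠ 0 := by
        intro h0; rw [h0] at hspos; simp at hspos
      calc ‖T m1 m2‖ ≤ 1/|Real.sin (π * (x m1 - x m2) / 2)| :=
            geom_bound (x m1 - x m2) hsne k₀ M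
        _ ≤ 1/Δ := one_div_le_one_div_of_le hΔpos hk
    calc ‖Off‖
        ≤ ∑ m1, ‖∑ m2 ∈ Finset.univ.erase m1,
            (g m1 * (starRingEnd ℂ) (g m2)) * T m1 m2‖ := norm_sum_le _ _
      _ ≤ ∑ m1, ∑ m2 ∈ Finset.univ.erase m1,
            ‖g m1‖ * ‖g m2‖ * (1/Δ) := by
          refine Finset.sum_le_sum fun m1 _ => ?_
          refine le_trans (norm_sum_le _ _) (Finset.sum_le_sum fun m2 hm2 => ?_)
          have hne : m1 ≠ m2 := (Finset.ne_of_mem_erase hm2).symm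
          rw [norm_mul, norm_mul]
          have h1 : ‖(starRingEnd ℂ) (g m2)‖ = ‖g m2‖ :=
            Complex.norm_conj _
          rw [h1]
          exact mul_le_mul_of_nonneg_left (hTbound m1 m2 hne) (by positivity)
      _ ≤ ∑ m1, ∑ m2, ‖g m1‖ * ‖g m2‖ * (1/Δ) := by
          refine Finset.sum_le_sum fun m1 _ => ?_
          refine Finset.sum_le_sum_of_subset_of_nonneg (Finset.erase_subset _ _)
            fun m2 _ _ => by positivity
      _ = (1/Δ) * (∑ m, ‖g m‖)^2 := by
          rw [sq, Finset.sum_mul_sum]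
          rw [Finset.mul_sum]
          refine Finset.sum_congr rfl fun m1 _ => ?_
          rw [Finset.mul_sum]
          exact Finset.sum_congr rfl fun m2 _ => by ring
  have hre : -((1/Δ) * (∑ m, ‖g m‖)^2) ≤ Off.re := by
    have h1 : |Off.re| ≤ ‖Off‖ := Complex.abs_re_le_norm Off
    have h2 : -|Off.re| ≤ Off.re := neg_abs_le _
    linarith
  linarith
end

section
/- Let H₀ be a traceless Hermitian 2^n × 2^n matrix with operator norm at most 1, let k be a nonzero integer and N a positive integer, and define A e^{iθ} := [tr(e^{−i(πk/2N) H₀}) / 2^n]^N with A ≥ 0, θ ∈ ℝ. Then A ≤ 1 and A ≥ 1 − π²k²/(8N). -/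
open Matrix Complex Real

lemma trace_exp_smul_hermitian (n : ℕ) (H₀ : Matrix (Fin (2 ^ n)) (Fin (2 ^ n)) ℂ)
    (hH : H₀.IsHermitian) (c : ℂ) :
    Matrix.trace (NormedSpace.exp (c • H₀)) = ∑ i, Complex.exp (c * hH.eigenvalues i) := by
  set U : Matrix (Fin (2^n)) (Fin (2^n)) ℂ := ↑(hH.eigenvectorUnitary)
  have hU : U * star U = 1 := (Matrix.mem_unitaryGroup_iff).mp hH.eigenvectorUnitary.2
  have hUinv : U⁻¹ = star U := Matrix.inv_eq_right_inv hU
  have hU' : star U * U = 1 := hH.eigenvectorUnitary.2.1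
  have hUnit : IsUnit U := ⟨⟨U, star U, hU, hU'⟩, rfl⟩
  have h1 : c • H₀ = U * (diagonal (fun i => c * hH.eigenvalues i)) * U⁻¹ := by
    rw [hUinv]
    conv_lhs => rw [hH.spectral_theorem]
    rw [Unitary.conjStarAlgAut_apply]
    rw [← smul_mul_assoc, ← mul_smul_comm, ← diagonal_smul]
    rfl
  rw [h1, Matrix.exp_conj _ _ hUnit, Matrix.trace_mul_cycle,
    Matrix.nonsing_inv_mul _ (hUnit.map (Matrix.detMonoidHom)), Matrix.one_mul,
    Matrix.exp_diagonal, Matrix.trace_diagonal]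
  simp [Complex.exp_eq_exp_ℂ]

/-- For a traceless Hermitian matrix `H₀` on `n` qubits whose eigenvalues all lie in `[-1,1]`,
a nonzero integer `k` and a positive integer `N`, the modulus
`A = |(tr e^{-i(πk/2N)H₀} / 2ⁿ)^N|` satisfies `1 - π²k²/(8N) ≤ A ≤ 1`. -/
theorem amplitude_bounds (n : ℕ) (H₀ : Matrix (Fin (2 ^ n)) (Fin (2 ^ n)) ℂ)
    (hH : H₀.IsHermitian) (htr : H₀.trace = 0)
    (hspec : ∀ i, |hH.eigenvalues i| ≤ 1)
    (k : ℤ) (hk : k ≠ 0) (N : ℕ) (hN : 0 < N)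
    (A : ℝ)
    (hA : A = ‖(Matrix.trace (NormedSpace.exp
        ((-(((π : ℂ) * k) / (2 * N)) * Complex.I) • H₀)) / 2 ^ n) ^ N‖) :
    A ≤ 1 ∧ 1 - π ^ 2 * (k : ℝ) ^ 2 / (8 * N) ≤ A := by
  set s : ℝ := π * k / (2 * N) with hs
  set c : ℂ := -(((π : ℂ) * k) / (2 * N)) * Complex.I with hc
  have hNne : (N : ℝ) ≠ 0 := Nat.cast_ne_zero.mpr hN.ne'
  have hcEig : ∀ i : Fin (2^n), c * (hH.eigenvalues i : ℂ)
      = ((-(s * hH.eigenvalues i) : ℝ) : ℂ) * Complex.I := by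
    intro i
    rw [hc, hs]
    push_cast
    ring
  have htrace : Matrix.trace (NormedSpace.exp (c • H₀))
      = ∑ i, Complex.exp (((-(s * hH.eigenvalues i) : ℝ) : ℂ) * Complex.I) := by
    rw [trace_exp_smul_hermitian n H₀ hH c]
    exact Finset.sum_congr rfl fun i _ => by rw [hcEig i]
  set z : ℂ := Matrix.trace (NormedSpace.exp (c • H₀)) / 2 ^ n with hz
  have hA' : A = ‖z‖ ^ N := by rw [hA, norm_pow]
  have habs_le : ‖z‖ ≤ 1 := by
    rw [hz, norm_div, htrace]
    have h2 : ‖(2:ℂ) ^ n‖ = 2 ^ n := by simp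
    rw [div_le_one (by rw [h2]; positivity)]
    calc ‖∑ i, Complex.exp (((-(s * hH.eigenvalues i) : ℝ) : ℂ) * Complex.I)‖
        ≤ ∑ i : Fin (2^n), ‖Complex.exp (((-(s * hH.eigenvalues i) : ℝ) : ℂ) * Complex.I)‖ :=
          norm_sum_le _ _
      _ = ∑ i : Fin (2^n), 1 := by
          exact Finset.sum_congr rfl fun i _ => Complex.norm_exp_ofReal_mul_I _
      _ = ‖(2:ℂ) ^ n‖ := by rw [h2]; simp
  -- Re z ≥ 1 - s^2/2
  have h2n : (2 : ℂ) ^ n = (((2 : ℝ) ^ n : ℝ) : ℂ) := by push_cast; ring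
  have hre : 1 - s ^ 2 / 2 ≤ z.re := by
    rw [hz, htrace, h2n, Complex.div_ofReal_re]
    rw [le_div_iff₀ (by positivity)]
    have : (∑ i, Complex.exp (((-(s * hH.eigenvalues i) : ℝ) : ℂ) * Complex.I)).re
        = ∑ i : Fin (2^n), Real.cos (-(s * hH.eigenvalues i)) := by
      rw [Complex.re_sum]
      exact Finset.sum_congr rfl fun i _ => Complex.exp_ofReal_mul_I_re _
    rw [this]
    calc (1 - s ^ 2 / 2) * 2 ^ n = ∑ _i : Fin (2^n), (1 - s ^ 2 / 2) := by
          rw [Finset.sum_const]; simp [mul_comm]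
      _ ≤ ∑ i : Fin (2^n), Real.cos (-(s * hH.eigenvalues i)) := by
          apply Finset.sum_le_sum
          intro i _
          refine le_trans ?_ (Real.one_sub_sq_div_two_le_cos)
          have h1 : (-(s * hH.eigenvalues i)) ^ 2 = s ^ 2 * (hH.eigenvalues i) ^ 2 := by ring
          have h2 : (hH.eigenvalues i) ^ 2 ≤ 1 := by
            have := hspec i
            nlinarith [abs_nonneg (hH.eigenvalues i), _root_.sq_abs (hH.eigenvalues i)]
          have h3 : s ^ 2 * (hH.eigenvalues i) ^ 2 ≤ s ^ 2 := by nlinarith [sq_nonneg s]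
          rw [h1]
          linarith
  have hsq : s ^ 2 / 2 = π ^ 2 * (k : ℝ) ^ 2 / (8 * N ^ 2) := by
    rw [hs]; field_simp; ring
  have hkey : (N : ℝ) * (s ^ 2 / 2) = π ^ 2 * (k : ℝ) ^ 2 / (8 * N) := by
    rw [hsq]; field_simp
  constructor
  · rw [hA']
    exact pow_le_one₀ (norm_nonneg z) habs_le
  · by_cases hcase : s ^ 2 / 2 ≤ 1
    · -- 1 - s²/2 ∈ [0,1]; A = |z|^N ≥ (1 - s²/2)^N ≥ 1 - N s²/2
      have h0 : (0:ℝ) ≤ 1 - s ^ 2 / 2 := by linarith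
      have hrez : 1 - s ^ 2 / 2 ≤ ‖z‖ := le_trans hre (Complex.re_le_norm z)
      have hp : (1 - s ^ 2 / 2) ^ N ≤ ‖z‖ ^ N :=
        pow_le_pow_left₀ h0 hrez N
      have hb : 1 - (N : ℝ) * (s ^ 2 / 2) ≤ (1 - s ^ 2 / 2) ^ N := by
        have := one_add_mul_le_pow (a := -(s ^ 2 / 2)) (by linarith) N
        calc 1 - (N : ℝ) * (s ^ 2 / 2) = 1 + (N : ℝ) * (-(s ^ 2 / 2)) := by ring
          _ ≤ (1 + -(s ^ 2 / 2)) ^ N := this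
          _ = (1 - s ^ 2 / 2) ^ N := by ring_nf
      rw [hA', ← hkey]
      linarith
    · -- bound is nonpositive
      push_neg at hcase
      have hA0 : 0 ≤ A := by rw [hA']; positivity
      have hN1 : (1:ℝ) ≤ (N:ℝ) := by exact_mod_cast hN
      have : (1:ℝ) ≤ (N : ℝ) * (s ^ 2 / 2) := by nlinarith [sq_nonneg s]
      rw [← hkey]
      linarith
end

section
/- Let H₀ be a traceless Hermitian 2^n × 2^n matrix with ‖H₀‖_op ≤ 1, k a positive integer, and N a positive integer with N ≥ 0.625 π k. With A e^{iθ} := [tr(e^{−i(πk/2N)H₀})/2^n]^N (A ≥ 0), the argument satisfies |θ| ≤ π³k³/(32 N²), where θ := N·arg(tr(e^{−i(πk/2N)H₀})/2^n) with arg taken in (−π/2, π/2). -/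
open Matrix Complex Real

/-- Quadratic lower bound trick: `t - t³/6 ≤ sin t` for `t ≥ 0`. -/
lemma my_sin_lower {t : ℝ} (ht : 0 ≤ t) : t - t ^ 3 / 6 ≤ Real.sin t := by
  have hd : ∀ u : ℝ, HasDerivAt (fun s : ℝ => Real.sin s - s + s ^ 3 / 6)
      (Real.cos u - 1 + u ^ 2 / 2) u := by
    intro u
    have h1 := Real.hasDerivAt_sin u
    have h2 := (hasDerivAt_pow 3 u).div_const 6
    have h3 := (h1.sub (hasDerivAt_id u)).add h2
    refine h3.congr_deriv ?_
    norm_num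
    ring
  have mono : MonotoneOn (fun s : ℝ => Real.sin s - s + s ^ 3 / 6) (Set.Ici 0) := by
    apply monotoneOn_of_deriv_nonneg (convex_Ici 0)
    · exact Continuous.continuousOn (by continuity)
    · intro u _
      exact (hd u).differentiableAt.differentiableWithinAt
    · intro u _
      rw [(hd u).deriv]
      nlinarith [Real.one_sub_sq_div_two_le_cos (x := u)]
  have h0 : (fun s : ℝ => Real.sin s - s + s ^ 3 / 6) 0 ≤
      (fun s : ℝ => Real.sin s - s + s ^ 3 / 6) t :=
    mono (Set.self_mem_Ici) ht ht
  simp only [Real.sin_zero] at h0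
  nlinarith [h0]

/-- `|sin t - t| ≤ |t|³ / 6`. -/
lemma my_abs_sin_sub_le (t : ℝ) : |Real.sin t - t| ≤ |t| ^ 3 / 6 := by
  rcases le_or_gt 0 t with h | h
  · have h1 := my_sin_lower h
    have h2 : Real.sin t ≤ t := Real.sin_le h
    rw [_root_.abs_of_nonneg h]
    rw [abs_le]
    constructor <;> nlinarith
  · have ht' : 0 ≤ -t := by linarith
    have h1 := my_sin_lower ht'
    have h2 : Real.sin (-t) ≤ -t := Real.sin_le ht'
    rw [Real.sin_neg] at h1 h2
    rw [_root_.abs_of_neg h, abs_le]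
    constructor <;> nlinarith

/-- `|arctan t| ≤ |t|`. -/
lemma my_abs_arctan_le (t : ℝ) : |Real.arctan t| ≤ |t| := by
  have key : ∀ s : ℝ, 0 ≤ s → Real.arctan s ≤ s := by
    intro s hs
    rcases eq_or_lt_of_le hs with h | h
    · simp [← h]
    · have h1 : 0 < Real.arctan s := by rw [← Real.arctan_zero]; exact Real.arctan_strictMono h
      have h2 : Real.arctan s < π / 2 := Real.arctan_lt_pi_div_two s
      have := Real.lt_tan h1 h2
      rw [Real.tan_arctan] at this
      linarith
  rcases le_or_gt 0 t with h | h
  · have han : 0 ≤ Real.arctan t := by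
      rw [← Real.arctan_zero]
      exact Real.arctan_strictMono.monotone h
    rw [_root_.abs_of_nonneg h, _root_.abs_of_nonneg han]
    exact key t h
  · have := key (-t) (by linarith)
    rw [Real.arctan_neg] at this
    have han : Real.arctan t < 0 := by
      rw [← Real.arctan_zero]
      exact Real.arctan_strictMono h
    rw [_root_.abs_of_neg h, _root_.abs_of_neg han]
    linarith

/-- Trace of the exponential of a complex multiple of a Hermitian matrix. -/
lemma my_trace_exp {m : ℕ} (H : Matrix (Fin m) (Fin m) ℂ) (hH : H.IsHermitian) (c : ℂ) :
    Matrix.trace (NormedSpace.exp (c • H)) = ∑ j, Complex.exp (c * hH.eigenvalues j) := by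
  set U : Matrix (Fin m) (Fin m) ℂ := (hH.eigenvectorUnitary : Matrix (Fin m) (Fin m) ℂ) with hU
  have hU1 : U * star U = 1 := (Matrix.mem_unitaryGroup_iff).mp hH.eigenvectorUnitary.2
  have hU2 : star U * U = 1 := (Matrix.mem_unitaryGroup_iff').mp hH.eigenvectorUnitary.2
  have hUunit : IsUnit U := ⟨⟨U, star U, hU1, hU2⟩, rfl⟩
  have hinv : U⁻¹ = star U := Matrix.inv_eq_right_inv hU1
  have hconj : c • H = U * (c • Matrix.diagonal (RCLike.ofReal ∘ hH.eigenvalues)) * U⁻¹ := by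
    rw [hinv]
    conv_lhs => rw [hH.spectral_theorem, Unitary.conjStarAlgAut_apply]
    rw [Matrix.mul_smul, Matrix.smul_mul]
  rw [hconj, Matrix.exp_conj U _ hUunit]
  have htr : Matrix.trace (U * NormedSpace.exp
      (c • Matrix.diagonal (RCLike.ofReal ∘ hH.eigenvalues)) * U⁻¹)
      = Matrix.trace (NormedSpace.exp (c • Matrix.diagonal (RCLike.ofReal ∘ hH.eigenvalues))) := by
    rw [Matrix.trace_mul_cycle, hinv, hU2, Matrix.one_mul]
  rw [htr, ← Matrix.diagonal_smul, Matrix.exp_diagonal, Matrix.trace_diagonal]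
  congr 1
  ext j
  rw [Pi.coe_exp, ← Complex.exp_eq_exp_ℂ]
  simp only [Pi.smul_apply, Function.comp_apply, smul_eq_mul]
  rfl

set_option maxHeartbeats 1000000 in
/-- For a traceless Hermitian matrix `H₀` on `n` qubits whose eigenvalues all lie in `[-1,1]`,
a positive integer `k` and a positive integer `N ≥ 0.625·π·k`, the phase
`θ = N · arg(tr e^{-i(πk/2N)H₀} / 2ⁿ)` satisfies `|θ| ≤ π³k³/(32N²)`. -/
theorem phase_bound (n : ℕ) (H₀ : Matrix (Fin (2 ^ n)) (Fin (2 ^ n)) ℂ)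
    (hH : H₀.IsHermitian) (htr : H₀.trace = 0)
    (hspec : ∀ i, |hH.eigenvalues i| ≤ 1)
    (k : ℕ) (hk : 0 < k) (N : ℕ) (hN : 0.625 * π * k ≤ (N : ℝ))
    (θ : ℝ)
    (hθ : θ = (N : ℝ) * Complex.arg (Matrix.trace (NormedSpace.exp
        ((-(((π : ℂ) * k) / (2 * N)) * Complex.I) • H₀)) / 2 ^ n)) :
    |θ| ≤ π ^ 3 * (k : ℝ) ^ 3 / (32 * (N : ℝ) ^ 2) := by
  have hπ : 0 < π := Real.pi_pos
  have hkpos : (0 : ℝ) < k := by exact_mod_cast hk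
  have hNpos : (0 : ℝ) < N := lt_of_lt_of_le (by positivity) hN
  set x : ℝ := π * k / (2 * N) with hxdef
  have hx0 : 0 < x := by positivity
  have hx8 : x ≤ 0.8 := by
    rw [hxdef, div_le_iff₀ (by positivity)]
    nlinarith
  set E := hH.eigenvalues with hE
  -- sum of eigenvalues is zero
  have hsumE : ∑ j, E j = 0 := by
    have h1 : H₀.trace = ∑ j, (E j : ℂ) := by
      conv_lhs => rw [hH.spectral_theorem, Unitary.conjStarAlgAut_apply]
      rw [Matrix.trace_mul_cycle,
        (Matrix.mem_unitaryGroup_iff').mp hH.eigenvectorUnitary.2,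
        Matrix.one_mul, Matrix.trace_diagonal]
      rfl
    rw [htr] at h1
    have h2 : ((∑ j, E j : ℝ) : ℂ) = 0 := by push_cast; rw [← h1]
    exact_mod_cast h2
  set c : ℂ := -(((π : ℂ) * k) / (2 * N)) * Complex.I with hc
  have hkey := my_trace_exp H₀ hH c
  -- rewrite each exponential term
  have hterm : ∀ j, c * (E j : ℂ) = ((-(x * E j) : ℝ) : ℂ) * Complex.I := by
    intro j
    rw [hc, hxdef]
    push_cast
    ring
  set T : ℂ := Matrix.trace (NormedSpace.exp (c • H₀)) with hT
  have hTre : T.re = ∑ j, Real.cos (-(x * E j)) := by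
    rw [hkey, Complex.re_sum]
    refine Finset.sum_congr rfl fun j _ => ?_
    rw [hterm j, Complex.exp_ofReal_mul_I_re]
  have hTim : T.im = ∑ j, Real.sin (-(x * E j)) := by
    rw [hkey, Complex.im_sum]
    refine Finset.sum_congr rfl fun j _ => ?_
    rw [hterm j, Complex.exp_ofReal_mul_I_im]
  set C : ℝ := ∑ j, Real.cos (-(x * E j)) with hC
  set S : ℝ := ∑ j, Real.sin (-(x * E j)) with hS
  set M : ℝ := (2 : ℝ) ^ n with hM
  have hMpos : 0 < M := by positivity
  -- lower bound on C
  have hClb : M * (1 - x ^ 2 / 2) ≤ C := by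
    rw [hC]
    have : ∀ j : Fin (2 ^ n), (1 - x ^ 2 / 2) ≤ Real.cos (-(x * E j)) := by
      intro j
      have h1 := Real.one_sub_sq_div_two_le_cos (x := -(x * E j))
      have h2 : (-(x * E j)) ^ 2 ≤ x ^ 2 := by
        have h3 := hspec j
        have hE2 : E j ^ 2 ≤ 1 := by
          nlinarith [abs_nonneg (E j), _root_.sq_abs (E j)]
        nlinarith [sq_nonneg x, mul_le_mul_of_nonneg_left hE2 (sq_nonneg x)]
      linarith
    calc M * (1 - x ^ 2 / 2) = ∑ _j : Fin (2 ^ n), (1 - x ^ 2 / 2) := by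
          rw [Finset.sum_const, Finset.card_univ, Fintype.card_fin, hM]
          push_cast; ring
      _ ≤ _ := Finset.sum_le_sum fun j _ => this j
  have hCpos : 0 < C := lt_of_lt_of_le (mul_pos hMpos (by nlinarith : (0:ℝ) < 1 - x ^ 2 / 2)) hClb
  -- upper bound on |S|
  have hSub : |S| ≤ M * x ^ 3 / 6 := by
    have hS' : S = ∑ j, (Real.sin (-(x * E j)) - (-(x * E j))) := by
      rw [hS, Finset.sum_sub_distrib]
      have h0 : ∑ j, -(x * E j) = 0 := by
        simp only [← Finset.mul_sum, ← neg_mul, hsumE, mul_zero]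
      rw [h0, sub_zero]
    rw [hS']
    calc |∑ j, (Real.sin (-(x * E j)) - (-(x * E j)))|
        ≤ ∑ j, |Real.sin (-(x * E j)) - (-(x * E j))| := Finset.abs_sum_le_sum_abs _ _
      _ ≤ ∑ _j : Fin (2 ^ n), x ^ 3 / 6 := by
          refine Finset.sum_le_sum fun j _ => ?_
          refine (my_abs_sin_sub_le _).trans ?_
          have h1 : |(-(x * E j))| ≤ x := by
            rw [abs_neg, abs_mul, _root_.abs_of_pos hx0]
            nlinarith [hspec j, abs_nonneg (E j)]
          have h2 : |(-(x * E j))| ^ 3 ≤ x ^ 3 := by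
            exact pow_le_pow_left₀ (abs_nonneg _) h1 3
          linarith
      _ = M * x ^ 3 / 6 := by
          rw [Finset.sum_const, Finset.card_univ, Fintype.card_fin, hM]
          push_cast; ring
  -- the complex number whose argument we take
  set z : ℂ := T / 2 ^ n with hz
  have h2n : ((2 : ℂ) ^ n) = ((M : ℝ) : ℂ) := by rw [hM]; push_cast; ring
  have hzre : z.re = C / M := by
    rw [hz, h2n, Complex.div_ofReal_re, hTre, hC]
  have hzim : z.im = S / M := by
    rw [hz, h2n, Complex.div_ofReal_im, hTim, hS]
  have hzrepos : 0 < z.re := by rw [hzre]; positivity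
  -- arg z = arctan (im/re)
  have habs : |Complex.arg z| < π / 2 :=
    Complex.abs_arg_lt_pi_div_two_iff.mpr (Or.inl hzrepos)
  have harg : Complex.arg z = Real.arctan (z.im / z.re) := by
    rw [← Complex.tan_arg]
    exact (Real.arctan_tan (abs_lt.mp habs).1 (abs_lt.mp habs).2).symm
  -- ratio bound
  have hratio : |z.im / z.re| ≤ x ^ 3 / 4 := by
    have hq : S / M / (C / M) = S / C := by
      field_simp
    rw [hzre, hzim, hq]
    rw [abs_div, _root_.abs_of_pos hCpos]
    have h1 : |S| / C ≤ (M * x ^ 3 / 6) / (M * (1 - x ^ 2 / 2)) := by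
      apply div_le_div₀ (by positivity) hSub (mul_pos hMpos (by nlinarith)) hClb
    refine h1.trans ?_
    rw [div_le_div_iff₀ (mul_pos hMpos (by nlinarith)) (by norm_num)]
    nlinarith [mul_nonneg (mul_nonneg hMpos.le (pow_pos hx0 3).le)
      (by nlinarith : (0:ℝ) ≤ 2/3 - x ^ 2)]
  -- combine
  have hargle : |Complex.arg z| ≤ x ^ 3 / 4 := by
    rw [harg]
    exact (my_abs_arctan_le _).trans hratio
  have hfinal : |θ| ≤ (N : ℝ) * (x ^ 3 / 4) := by
    rw [hθ, abs_mul, _root_.abs_of_pos hNpos]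
    exact mul_le_mul_of_nonneg_left hargle (le_of_lt hNpos)
  refine hfinal.trans_eq ?_
  rw [hxdef]
  field_simp
  ring
end

section
/- Let H be an n-qubit Hermitian matrix, k an integer, N a positive integer, and for each tuple (v_1,…,v_N) of Pauli strings let Υ := diag(e^{−i(kπ/2)H}, ∏_{m=1}^{N} σ_{v_m} e^{−i(kπ/2N)H} σ_{v_m}) acting on ℂ² ⊗ (ℂ²)^{⊗n} (block-diagonal in the control qubit). Then averaging over all Pauli string tuples: (1/4^{nN}) ∑_{v_1,…,v_N} Υ† (X ⊗ I) Υ = |0⟩⟨1| ⊗ (e^{i(kπ/2)H}) · [tr(e^{−i(kπ/2N)H})/2^n]^N + |1⟩⟨0| ⊗ [tr(e^{−i(kπ/2N)H})*/2^n]^N · e^{−i(kπ/2)H}. -/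
open Matrix Complex Real
open scoped Kronecker

/-- The four single-qubit Pauli matrices `σ₀ = I, σ₁ = X, σ₂ = Y, σ₃ = Z`. -/
noncomputable def pauli : Fin 4 → Matrix (Fin 2) (Fin 2) ℂ
  | 0 => 1
  | 1 => !![0, 1; 1, 0]
  | 2 => !![0, -Complex.I; Complex.I, 0]
  | 3 => !![1, 0; 0, -1]

/-- The Pauli string `σ_v = σ_{v₁} ⊗ ⋯ ⊗ σ_{vₙ}` on `n` qubits. -/
noncomputable def pauliString {n : ℕ} (v : Fin n → Fin 4) :
    Matrix (Fin n → Fin 2) (Fin n → Fin 2) ℂ :=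
  Matrix.of fun i j => ∏ l : Fin n, pauli (v l) (i l) (j l)

lemma pauli_single_sum (i a b j : Fin 2) :
    ∑ w : Fin 4, pauli w i a * pauli w b j = if a = b ∧ i = j then 2 else 0 := by
  fin_cases i <;> fin_cases a <;> fin_cases b <;> fin_cases j <;>
    simp [pauli, Fin.sum_univ_four, Matrix.one_apply] <;> ring

lemma sum_pauliString_pair {n : ℕ} (i a b j : Fin n → Fin 2) :
    ∑ v : Fin n → Fin 4, pauliString v i a * pauliString v b j
      = if a = b ∧ i = j then (2 : ℂ) ^ n else 0 := by
  have h1 : ∀ v : Fin n → Fin 4, pauliString v i a * pauliString v b j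
      = ∏ l : Fin n, (pauli (v l) (i l) (a l) * pauli (v l) (b l) (j l)) := by
    intro v
    simp [pauliString, Finset.prod_mul_distrib]
  simp_rw [h1]
  have h2 := Fintype.prod_sum (fun (l : Fin n) (w : Fin 4) =>
    pauli w (i l) (a l) * pauli w (b l) (j l))
  rw [← h2]
  simp_rw [pauli_single_sum]
  by_cases h : a = b ∧ i = j
  · obtain ⟨hab, hij⟩ := h
    subst hab hij
    simp
  · rw [if_neg h]
    have : ∃ l : Fin n, ¬(a l = b l ∧ i l = j l) := by
      by_contra hc
      push_neg at hc
      exact h ⟨funext fun l => (hc l).1, funext fun l => (hc l).2⟩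
    obtain ⟨l, hl⟩ := this
    exact Finset.prod_eq_zero (Finset.mem_univ l) (if_neg hl)

lemma pauliString_twirl {n : ℕ} (M : Matrix (Fin n → Fin 2) (Fin n → Fin 2) ℂ) :
    ∑ v : Fin n → Fin 4, pauliString v * M * pauliString v
      = ((2 : ℂ) ^ n * M.trace) • (1 : Matrix (Fin n → Fin 2) (Fin n → Fin 2) ℂ) := by
  ext i j
  rw [Matrix.sum_apply]
  have h1 : ∀ v : Fin n → Fin 4, (pauliString v * M * pauliString v) i j
      = ∑ a : Fin n → Fin 2, ∑ b : Fin n → Fin 2,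
          M a b * (pauliString v i a * pauliString v b j) := by
    intro v
    rw [Matrix.mul_apply]
    simp_rw [Matrix.mul_apply, Finset.sum_mul]
    rw [Finset.sum_comm]
    congr 1; ext a; congr 1; ext b; ring
  simp_rw [h1]
  rw [Finset.sum_comm]
  have h2 : ∀ a : Fin n → Fin 2,
      (∑ v : Fin n → Fin 4, ∑ b : Fin n → Fin 2,
        M a b * (pauliString v i a * pauliString v b j))
      = ∑ b : Fin n → Fin 2, M a b *
          (∑ v : Fin n → Fin 4, pauliString v i a * pauliString v b j) := by
    intro a
    rw [Finset.sum_comm]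
    simp_rw [Finset.mul_sum]
  simp_rw [h2, sum_pauliString_pair]
  by_cases hij : i = j
  · subst hij
    simp only [and_true, Matrix.smul_apply, Matrix.one_apply_eq, smul_eq_mul, mul_one]
    have h3 : ∀ a : Fin n → Fin 2, (∑ b : Fin n → Fin 2,
        M a b * (if a = b then (2:ℂ)^n else 0)) = M a a * 2 ^ n := by
      intro a
      rw [Finset.sum_eq_single a]
      · simp
      · intro b _ hb
        rw [if_neg fun h => hb h.symm, mul_zero]
      · intro h
        exact absurd (Finset.mem_univ a) h
    simp_rw [h3, ← Finset.sum_mul, Matrix.trace]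
    simp [Matrix.diag]
    ring
  · simp only [hij, and_false, if_false, mul_zero, Finset.sum_const_zero]
    rw [Matrix.smul_apply, Matrix.one_apply_ne hij]
    simp

lemma sum_listProd {α M : Type*} [Fintype α] [Semiring M] (N : ℕ) (f : α → M) :
    ∑ v : Fin N → α, (List.ofFn fun m => f (v m)).prod = (∑ w, f w) ^ N := by
  induction N with
  | zero => simp
  | succ N ih =>
    rw [← Equiv.sum_comp (Fin.consEquiv fun _ : Fin (N+1) => α)
      (fun v => (List.ofFn fun m => f (v m)).prod)]
    rw [Fintype.sum_prod_type]
    have key : ∀ (x : α) (w : Fin N → α),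
        (List.ofFn fun m : Fin (N+1) => f ((Fin.consEquiv fun _ : Fin (N+1) => α) (x, w) m)).prod
          = f x * (List.ofFn fun m : Fin N => f (w m)).prod := by
      intro x w
      rw [List.ofFn_succ]
      simp [Fin.consEquiv, Fin.cons_succ]
    simp_rw [key, ← Finset.mul_sum, ← Finset.sum_mul, ih]
    rw [pow_succ']

lemma kron_conjT {l m p q : Type*} (A : Matrix l m ℂ) (B : Matrix p q ℂ) :
    (A ⊗ₖ B)ᴴ = Aᴴ ⊗ₖ Bᴴ := by
  ext ⟨i, j⟩ ⟨a, b⟩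
  simp [Matrix.conjTranspose_apply, mul_comm]

lemma kron_sum {l m p q ι : Type*} (s : Finset ι) (A : Matrix l m ℂ)
    (f : ι → Matrix p q ℂ) :
    ∑ i ∈ s, A ⊗ₖ f i = A ⊗ₖ ∑ i ∈ s, f i := by
  ext ⟨i, j⟩ ⟨a, b⟩
  simp [Matrix.sum_apply, Finset.mul_sum]

lemma blk1 : (Matrix.single (0 : Fin 2) (0 : Fin 2) (1 : ℂ))ᴴ *
    !![0, 1; 1, 0] * Matrix.single (0 : Fin 2) (0 : Fin 2) (1 : ℂ) = 0 := by
  ext i j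
  fin_cases i <;> fin_cases j <;>
    simp [Matrix.mul_apply, Fin.sum_univ_two, Matrix.single, Matrix.conjTranspose_apply]

lemma blk2 : (Matrix.single (0 : Fin 2) (0 : Fin 2) (1 : ℂ))ᴴ *
    !![0, 1; 1, 0] * Matrix.single (1 : Fin 2) (1 : Fin 2) (1 : ℂ)
    = Matrix.single (0 : Fin 2) (1 : Fin 2) (1 : ℂ) := by
  ext i j
  fin_cases i <;> fin_cases j <;>
    simp [Matrix.mul_apply, Fin.sum_univ_two, Matrix.single, Matrix.conjTranspose_apply]

lemma blk3 : (Matrix.single (1 : Fin 2) (1 : Fin 2) (1 : ℂ))ᴴ *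
    !![0, 1; 1, 0] * Matrix.single (0 : Fin 2) (0 : Fin 2) (1 : ℂ)
    = Matrix.single (1 : Fin 2) (0 : Fin 2) (1 : ℂ) := by
  ext i j
  fin_cases i <;> fin_cases j <;>
    simp [Matrix.mul_apply, Fin.sum_univ_two, Matrix.single, Matrix.conjTranspose_apply]

lemma blk4 : (Matrix.single (1 : Fin 2) (1 : Fin 2) (1 : ℂ))ᴴ *
    !![0, 1; 1, 0] * Matrix.single (1 : Fin 2) (1 : Fin 2) (1 : ℂ) = 0 := by
  ext i j
  fin_cases i <;> fin_cases j <;>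
    simp [Matrix.mul_apply, Fin.sum_univ_two, Matrix.single, Matrix.conjTranspose_apply]

/-- Averaging the conjugation `Υ† (X ⊗ I) Υ` of the block-diagonal unitary
`Υ = diag(e^{-i(kπ/2)H}, ∏ₘ σ_{vₘ} e^{-i(kπ/2N)H} σ_{vₘ})` over all tuples of Pauli strings gives
`|0⟩⟨1| ⊗ (tr e^{-i(kπ/2N)H}/2ⁿ)^N e^{i(kπ/2)H} + |1⟩⟨0| ⊗ (tr e^{-i(kπ/2N)H}/2ⁿ)*^N e^{-i(kπ/2)H}`. -/
theorem pauli_tuple_average_conjugation (n : ℕ) (H : Matrix (Fin n → Fin 2) (Fin n → Fin 2) ℂ)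
    (hH : H.IsHermitian) (k : ℤ) (N : ℕ) (hN : 0 < N) :
    ((1 : ℂ) / 4 ^ (n * N)) • ∑ v : Fin N → (Fin n → Fin 4),
        (Matrix.single (0 : Fin 2) (0 : Fin 2) (1 : ℂ) ⊗ₖ
            NormedSpace.exp ((-(((k : ℂ) * π) / 2) * Complex.I) • H) +
          Matrix.single (1 : Fin 2) (1 : Fin 2) (1 : ℂ) ⊗ₖ
            (List.ofFn fun m : Fin N => pauliString (v m) *
              NormedSpace.exp ((-(((k : ℂ) * π) / (2 * N)) * Complex.I) • H) *
              pauliString (v m)).prod)ᴴ *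
        ((!![0, 1; 1, 0] : Matrix (Fin 2) (Fin 2) ℂ) ⊗ₖ
          (1 : Matrix (Fin n → Fin 2) (Fin n → Fin 2) ℂ)) *
        (Matrix.single (0 : Fin 2) (0 : Fin 2) (1 : ℂ) ⊗ₖ
            NormedSpace.exp ((-(((k : ℂ) * π) / 2) * Complex.I) • H) +
          Matrix.single (1 : Fin 2) (1 : Fin 2) (1 : ℂ) ⊗ₖ
            (List.ofFn fun m : Fin N => pauliString (v m) *
              NormedSpace.exp ((-(((k : ℂ) * π) / (2 * N)) * Complex.I) • H) *
              pauliString (v m)).prod)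
      = Matrix.single (0 : Fin 2) (1 : Fin 2) (1 : ℂ) ⊗ₖ
          (((Matrix.trace (NormedSpace.exp ((-(((k : ℂ) * π) / (2 * N)) * Complex.I) • H))
              / 2 ^ n) ^ N) •
            NormedSpace.exp ((((k : ℂ) * π) / 2 * Complex.I) • H)) +
        Matrix.single (1 : Fin 2) (0 : Fin 2) (1 : ℂ) ⊗ₖ
          (((starRingEnd ℂ (Matrix.trace (NormedSpace.exp
              ((-(((k : ℂ) * π) / (2 * N)) * Complex.I) • H)) / 2 ^ n)) ^ N) •
            NormedSpace.exp ((-(((k : ℂ) * π) / 2) * Complex.I) • H)) := by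
  set A := NormedSpace.exp ((-(((k : ℂ) * π) / 2) * Complex.I) • H) with hA
  set B := NormedSpace.exp ((-(((k : ℂ) * π) / (2 * N)) * Complex.I) • H) with hB
  set A' := NormedSpace.exp ((((k : ℂ) * π) / 2 * Complex.I) • H) with hA'
  set P : (Fin N → (Fin n → Fin 4)) → Matrix (Fin n → Fin 2) (Fin n → Fin 2) ℂ :=
    fun v => (List.ofFn fun m : Fin N => pauliString (v m) * B * pauliString (v m)).prod with hP
  have hAH : Aᴴ = A' := by
    rw [hA, ← Matrix.exp_conjTranspose, hA']
    congr 1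
    rw [Matrix.conjTranspose_smul, hH.eq]
    congr 1
    simp only [star_mul', Complex.star_def, map_neg, map_div₀, _root_.map_mul,
      Complex.conj_I, Complex.conj_ofReal, map_intCast, map_ofNat]
    ring
  have key : ∀ v : Fin N → (Fin n → Fin 4),
      (Matrix.single (0 : Fin 2) (0 : Fin 2) (1 : ℂ) ⊗ₖ A +
          Matrix.single (1 : Fin 2) (1 : Fin 2) (1 : ℂ) ⊗ₖ P v)ᴴ *
        ((!![0, 1; 1, 0] : Matrix (Fin 2) (Fin 2) ℂ) ⊗ₖ
          (1 : Matrix (Fin n → Fin 2) (Fin n → Fin 2) ℂ)) *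
        (Matrix.single (0 : Fin 2) (0 : Fin 2) (1 : ℂ) ⊗ₖ A +
          Matrix.single (1 : Fin 2) (1 : Fin 2) (1 : ℂ) ⊗ₖ P v)
      = Matrix.single (0 : Fin 2) (1 : Fin 2) (1 : ℂ) ⊗ₖ (Aᴴ * P v) +
        Matrix.single (1 : Fin 2) (0 : Fin 2) (1 : ℂ) ⊗ₖ ((P v)ᴴ * A) := by
    intro v
    rw [Matrix.conjTranspose_add, kron_conjT, kron_conjT]
    simp only [Matrix.add_mul, Matrix.mul_add, ← Matrix.mul_kronecker_mul, Matrix.mul_one]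
    rw [blk1, blk2, blk3, blk4]
    simp only [Matrix.zero_kronecker, zero_add, add_zero]
    exact add_comm _ _
  rw [Finset.sum_congr rfl (fun v _ => key v)]
  rw [Finset.sum_add_distrib]
  have hsum : ∑ v : Fin N → (Fin n → Fin 4), P v
      = (((2 : ℂ) ^ n * B.trace) ^ N) •
          (1 : Matrix (Fin n → Fin 2) (Fin n → Fin 2) ℂ) := by
    rw [hP]
    rw [sum_listProd N (fun w : Fin n → Fin 4 => pauliString w * B * pauliString w)]
    rw [pauliString_twirl, smul_pow, one_pow]
  have h1 : ∑ v : Fin N → (Fin n → Fin 4),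
      Matrix.single (0 : Fin 2) (1 : Fin 2) (1 : ℂ) ⊗ₖ (Aᴴ * P v)
      = Matrix.single (0 : Fin 2) (1 : Fin 2) (1 : ℂ) ⊗ₖ
          ((((2 : ℂ) ^ n * B.trace) ^ N) • Aᴴ) := by
    rw [kron_sum, ← Finset.mul_sum, hsum, Matrix.mul_smul, Matrix.mul_one]
  have h2 : ∑ v : Fin N → (Fin n → Fin 4),
      Matrix.single (1 : Fin 2) (0 : Fin 2) (1 : ℂ) ⊗ₖ ((P v)ᴴ * A)
      = Matrix.single (1 : Fin 2) (0 : Fin 2) (1 : ℂ) ⊗ₖ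
          ((starRingEnd ℂ (((2 : ℂ) ^ n * B.trace) ^ N)) • A) := by
    rw [kron_sum, ← Finset.sum_mul, ← Matrix.conjTranspose_sum, hsum,
      Matrix.conjTranspose_smul, Matrix.conjTranspose_one, Matrix.smul_mul, Matrix.one_mul]
    rfl
  rw [h1, h2, hAH]
  rw [Matrix.kronecker_smul, Matrix.kronecker_smul, Matrix.kronecker_smul,
    Matrix.kronecker_smul, smul_add, smul_smul, smul_smul]
  have h2n : ((2 : ℂ) ^ n : ℂ) ≠ 0 := pow_ne_zero _ two_ne_zero
  have h4 : ((4 : ℂ)) ^ (n * N) = ((2 : ℂ) ^ n) ^ N * ((2 : ℂ) ^ n) ^ N := by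
    rw [show (4 : ℂ) = 2 * 2 by norm_num, mul_pow, ← pow_mul]
  congr 1
  · congr 1
    rw [mul_pow, div_pow, h4]
    field_simp
  · congr 1
    simp only [map_pow, _root_.map_mul, map_div₀, map_ofNat]
    rw [mul_pow, div_pow, h4]
    field_simp
end
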